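/- arXiv:math/0003195 — 4 statements merged into one kernel-verified Lean document; each statement's English description precedes it below -/
import Mathlib

section
/- Let F_q be a finite field with q elements and for each d ≥ 1 let N_d(q) be the number of monic irreducible polynomials of degree d over F_q. Then for every real u with |u| < 1, the infinite product ∏_{d=1}^∞ (1 − (u/q)^d)^{N_d(q)} converges and equals 1 − u. -/
open Polynomial IntermediateField Module

/-- The number of monic irreducible polynomials of degree `d` over the finite field `F`. -/
noncomputable def numMonicIrred (F : Type) [Field F] [Fintype F] (d : ℕ) : ℕ :=
  Nat.card {p : Polynomial F // p.Monic ∧ Irreducible p ∧ p.natDegree = d}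

section Alg

variable {F : Type} [Field F] [Fintype F]

private lemma pow_pow_eq_self {Ω : Type*} [Monoid Ω] {a : Ω} {s m : ℕ} (h : a ^ s = a) :
    a ^ s ^ m = a := by
  induction m with
  | zero => simpa using rfl
  | succ k ih => rw [pow_succ, pow_mul, ih, h]

/-- If the degree of the minimal polynomial of `x` divides `n`, then `x ^ q ^ n = x`. -/
private lemma pow_card_pow_eq_self {Ω : Type*} [Field Ω] [Algebra F Ω] {x : Ω}
    (hx : IsIntegral F x) {n : ℕ} (hd : (minpoly F x).natDegree ∣ n) :
    x ^ Fintype.card F ^ n = x := by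
  obtain ⟨m, rfl⟩ := hd
  set d := (minpoly F x).natDegree
  have : FiniteDimensional F F⟮x⟯ := adjoin.finiteDimensional hx
  have : Finite F⟮x⟯ := Module.finite_of_finite F
  have : Fintype F⟮x⟯ := Fintype.ofFinite _
  have hcard : Fintype.card F⟮x⟯ = Fintype.card F ^ d := by
    rw [card_eq_pow_finrank (K := F) (V := F⟮x⟯), adjoin.finrank hx]
  have hgen : (AdjoinSimple.gen F x : Ω) = x := rfl
  have h1 : (AdjoinSimple.gen F x) ^ Fintype.card F ^ d = AdjoinSimple.gen F x := by
    rw [← hcard]; exact FiniteField.pow_card _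
  have h2 : (AdjoinSimple.gen F x) ^ (Fintype.card F ^ d) ^ m = AdjoinSimple.gen F x :=
    pow_pow_eq_self h1
  calc x ^ Fintype.card F ^ (d * m) = ((AdjoinSimple.gen F x) ^ (Fintype.card F ^ d) ^ m : F⟮x⟯) := by
        push_cast [hgen, pow_mul]
        norm_cast
    _ = x := by rw [h2, hgen]

end Alg

section Sfield

variable {F : Type} [Field F] [Fintype F] {Ω : Type*} [Field Ω] [Algebra F Ω]

/-- The set of solutions of `x ^ q ^ n = x` as an intermediate field. -/
private noncomputable def fixedSubfield (n : ℕ) : IntermediateField F Ω where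
  carrier := {y : Ω | y ^ Fintype.card F ^ n = y}
  mul_mem' {a b} ha hb := by simp only [Set.mem_setOf_eq] at *; rw [mul_pow, ha, hb]
  one_mem' := by simp
  add_mem' {a b} ha hb := by
    set p := ringChar F with hpdef
    obtain ⟨k, hp, hq⟩ := FiniteField.card F p
    haveI : Fact p.Prime := ⟨hp⟩
    haveI : CharP Ω p := charP_of_injective_algebraMap (algebraMap F Ω).injective p
    simp only [Set.mem_setOf_eq] at *
    rw [hq, ← pow_mul, add_pow_char_pow, pow_mul, ← hq, ha, hb]
  zero_mem' := by simp [pos_iff_ne_zero.mp Fintype.card_pos]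
  inv_mem' a ha := by
    simp only [Set.mem_setOf_eq] at *
    rw [inv_pow, ha]
  algebraMap_mem' a := by
    simp only [Set.mem_setOf_eq, ← map_pow, FiniteField.pow_card_pow]

end Sfield

section Dvd

variable {F : Type} [Field F] [Fintype F] {Ω : Type*} [Field Ω] [Algebra F Ω]
  [IsAlgClosed Ω] [Algebra.IsAlgebraic F Ω]

private lemma sep_big (n : ℕ) (hn : n ≠ 0) :
    Separable (X ^ Fintype.card F ^ n - X : F[X]) := by
  obtain ⟨k, hp, hq⟩ := FiniteField.card F (ringChar F)
  haveI : Fact (ringChar F).Prime := ⟨hp⟩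
  refine galois_poly_separable (ringChar F) _ ?_
  refine dvd_pow ?_ hn
  rw [hq]
  exact dvd_pow_self _ (by positivity)

private lemma card_rootSet_big (n : ℕ) (hn : n ≠ 0) :
    Fintype.card ((X ^ Fintype.card F ^ n - X : F[X]).rootSet Ω) = Fintype.card F ^ n := by
  rw [card_rootSet_eq_natDegree (sep_big n hn) (IsAlgClosed.splits _),
    FiniteField.X_pow_card_sub_X_natDegree_eq F (Nat.one_lt_pow hn Fintype.one_lt_card)]

private lemma carrier_eq (n : ℕ) (hn : n ≠ 0) :
    ((fixedSubfield n : IntermediateField F Ω) : Set Ω)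
      = (X ^ Fintype.card F ^ n - X : F[X]).rootSet Ω := by
  have hbig : (X ^ Fintype.card F ^ n - X : F[X]) ≠ 0 :=
    FiniteField.X_pow_card_sub_X_ne_zero F (Nat.one_lt_pow hn Fintype.one_lt_card)
  ext y
  rw [mem_rootSet_of_ne hbig]
  simp only [map_sub, map_pow, aeval_X, sub_eq_zero]
  exact ⟨fun h => h, fun h => h⟩

private lemma minpoly_natDegree_dvd {n : ℕ} (hn : n ≠ 0) {x : Ω}
    (hx : x ^ Fintype.card F ^ n = x) : (minpoly F x).natDegree ∣ n := by
  have hxint : IsIntegral F x := Algebra.IsIntegral.isIntegral x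
  set S : IntermediateField F Ω := fixedSubfield n with hS
  have hfin : (S : Set Ω).Finite := by
    rw [hS, carrier_eq n hn]; exact Set.toFinite _
  letI : Fintype S := hfin.fintype
  have hcardS : Fintype.card S = Fintype.card F ^ n := by
    rw [← card_rootSet_big (F := F) (Ω := Ω) n hn]
    exact Fintype.card_congr (Equiv.setCongr (carrier_eq n hn))
  have hrankS : finrank F S = n := by
    have := card_eq_pow_finrank (K := F) (V := S)
    rw [hcardS] at this
    exact (Nat.pow_right_injective Fintype.one_lt_card this.symm)
  have hle : F⟮x⟯ ≤ S := by
    rw [adjoin_simple_le_iff]; exact hx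
  have hdvd : finrank F F⟮x⟯ ∣ finrank F S := by
    refine ⟨relfinrank F⟮x⟯ S, ?_⟩
    rw [← relfinrank_bot_left F⟮x⟯, ← relfinrank_bot_left S,
      relfinrank_mul_relfinrank bot_le hle]
  rwa [adjoin.finrank hxint, hrankS] at hdvd

end Dvd

section Key

variable {F : Type} [Field F] [Fintype F]

private lemma finite_monic_bounded (n : ℕ) (hn : n ≠ 0) :
    Finite {p : F[X] // p.Monic ∧ Irreducible p ∧ p.natDegree ∣ n} := by
  refine Finite.of_injective
    (fun p => fun i : Fin (n + 1) => (p : F[X]).coeff i) ?_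
  rintro ⟨p, hp⟩ ⟨r, hr⟩ h
  have hpn : p.natDegree ≤ n := Nat.le_of_dvd (Nat.pos_of_ne_zero hn) hp.2.2
  have hrn : r.natDegree ≤ n := Nat.le_of_dvd (Nat.pos_of_ne_zero hn) hr.2.2
  ext1
  ext m
  by_cases hm : m ≤ n
  · exact congrFun h ⟨m, Nat.lt_succ_of_le hm⟩
  · rw [p.coeff_eq_zero_of_natDegree_lt (lt_of_le_of_lt hpn (not_le.mp hm)),
      r.coeff_eq_zero_of_natDegree_lt (lt_of_le_of_lt hrn (not_le.mp hm))]

private lemma finite_monic_deg (d : ℕ) :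
    Finite {p : F[X] // p.Monic ∧ Irreducible p ∧ p.natDegree = d} := by
  refine Finite.of_injective
    (fun p => fun i : Fin (d + 1) => (p : F[X]).coeff i) ?_
  rintro ⟨p, hp⟩ ⟨r, hr⟩ h
  have hpn : p.natDegree ≤ d := hp.2.2.le
  have hrn : r.natDegree ≤ d := hr.2.2.le
  ext1
  ext m
  by_cases hm : m ≤ d
  · exact congrFun h ⟨m, Nat.lt_succ_of_le hm⟩
  · rw [p.coeff_eq_zero_of_natDegree_lt (lt_of_le_of_lt hpn (not_le.mp hm)),
      r.coeff_eq_zero_of_natDegree_lt (lt_of_le_of_lt hrn (not_le.mp hm))]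

end Key

section Count

variable {F : Type} [Field F] [Fintype F]

private lemma mem_big_iff {n : ℕ} (hn : n ≠ 0) {Ω : Type*} [Field Ω] [Algebra F Ω] {y : Ω} :
    y ∈ (X ^ Fintype.card F ^ n - X : F[X]).rootSet Ω ↔ y ^ Fintype.card F ^ n = y := by
  have hbig : (X ^ Fintype.card F ^ n - X : F[X]) ≠ 0 :=
    FiniteField.X_pow_card_sub_X_ne_zero F (Nat.one_lt_pow hn Fintype.one_lt_card)
  rw [mem_rootSet_of_ne hbig]
  simp only [map_sub, map_pow, aeval_X, sub_eq_zero]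

private lemma key_identity (n : ℕ) (hn : n ≠ 0) :
    ∑ d ∈ n.divisors, d * numMonicIrred F d = Fintype.card F ^ n := by
  classical
  set Ω := AlgebraicClosure F
  set big : F[X] := X ^ Fintype.card F ^ n - X with hbigdef
  set S := big.rootSet Ω with hSdef
  letI : Finite {p : F[X] // p.Monic ∧ Irreducible p ∧ p.natDegree ∣ n} :=
    finite_monic_bounded n hn
  set T := {p : F[X] // p.Monic ∧ Irreducible p ∧ p.natDegree ∣ n} with hTdef
  letI : Fintype T := Fintype.ofFinite T
  -- the fiber map
  have hint : ∀ y : Ω, IsIntegral F y := fun y => Algebra.IsIntegral.isIntegral y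
  set m : S → T := fun x =>
    ⟨minpoly F (x : Ω), minpoly.monic (hint _), minpoly.irreducible (hint _),
      minpoly_natDegree_dvd hn ((mem_big_iff hn).mp x.2)⟩ with hmdef
  -- the fiber over t is equivalent to the root set of t
  have fiberEquiv : ∀ t : T, {x : S // m x = t} ≃ ((t : F[X]).rootSet Ω) := by
    intro t
    refine ⟨fun x => ⟨(x.1 : Ω), ?_⟩, fun y => ⟨⟨(y : Ω), ?_⟩, ?_⟩, ?_, ?_⟩
    · rw [mem_rootSet_of_ne (t.2.2.1.ne_zero)]
      have : (t : F[X]) = minpoly F (x.1 : Ω) := by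
        have := congrArg Subtype.val x.2; exact this.symm
      rw [this]
      exact minpoly.aeval F _
    · -- y is a root of t, so y ^ q ^ n = y
      have hy : aeval (y : Ω) (t : F[X]) = 0 :=
        (mem_rootSet_of_ne (t.2.2.1.ne_zero)).mp y.2
      have hmin : (t : F[X]) = minpoly F (y : Ω) :=
        minpoly.eq_of_irreducible_of_monic t.2.2.1 hy t.2.1
      rw [hSdef, mem_big_iff hn]
      exact pow_card_pow_eq_self (hint _) (hmin ▸ t.2.2.2)
    · -- minpoly of y is t
      have hy : aeval (y : Ω) (t : F[X]) = 0 :=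
        (mem_rootSet_of_ne (t.2.2.1.ne_zero)).mp y.2
      have hmin : (t : F[X]) = minpoly F (y : Ω) :=
        minpoly.eq_of_irreducible_of_monic t.2.2.1 hy t.2.1
      exact Subtype.ext hmin.symm
    · intro x; ext; rfl
    · intro y; ext; rfl
  -- card of the root set of each t is its degree
  have fibercard : ∀ t : T, Fintype.card ((t : F[X]).rootSet Ω) = (t : F[X]).natDegree :=
    fun t => card_rootSet_eq_natDegree (PerfectField.separable_of_irreducible t.2.2.1)
      (IsAlgClosed.splits _)
  -- total count
  have hcardS : Fintype.card S = Fintype.card F ^ n := card_rootSet_big n hn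
  have hsum : Fintype.card S = ∑ t : T, (t : F[X]).natDegree := by
    rw [← Fintype.card_congr (Equiv.sigmaFiberEquiv m), Fintype.card_sigma]
    refine Finset.sum_congr rfl fun t _ => ?_
    rw [Fintype.card_congr (fiberEquiv t), fibercard t]
  -- regroup by degree
  have regroup : ∑ t : T, (t : F[X]).natDegree
      = ∑ d ∈ n.divisors, d * numMonicIrred F d := by
    rw [← Finset.sum_fiberwise_of_maps_to (fun t _ => Nat.mem_divisors.mpr ⟨t.2.2.2, hn⟩)
      (fun t : T => (t : F[X]).natDegree)]
    refine Finset.sum_congr rfl fun d hd => ?_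
    obtain ⟨hddvd, -⟩ := Nat.mem_divisors.mp hd
    have : ∑ t ∈ Finset.univ.filter (fun t : T => (t : F[X]).natDegree = d),
        (t : F[X]).natDegree
        = (Finset.univ.filter (fun t : T => (t : F[X]).natDegree = d)).card * d := by
      rw [Finset.sum_congr rfl (fun t ht => (Finset.mem_filter.mp ht).2), Finset.sum_const,
        smul_eq_mul]
    rw [this, ← Fintype.card_subtype, mul_comm]
    congr 1
    rw [numMonicIrred, ← Nat.card_eq_fintype_card]
    refine Nat.card_congr ⟨fun t => ⟨t.1.1, t.1.2.1, t.1.2.2.1, t.2⟩,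
      fun p => ⟨⟨p.1, p.2.1, p.2.2.1, by rw [p.2.2.2]; exact hddvd⟩, p.2.2.2⟩, ?_, ?_⟩
    · rintro ⟨⟨p, hp⟩, hp2⟩; rfl
    · rintro ⟨p, hp⟩; rfl
  rw [← regroup, ← hsum, hcardS]

end Count

section Analytic

variable {F : Type} [Field F] [Fintype F]

private lemma numMonicIrred_zero : numMonicIrred F 0 = 0 := by
  rw [numMonicIrred]
  have : IsEmpty {p : F[X] // p.Monic ∧ Irreducible p ∧ p.natDegree = 0} :=
    ⟨fun ⟨p, h1, h2, h3⟩ => (h2.natDegree_pos).ne' h3⟩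
  exact Nat.card_of_isEmpty

private lemma numMonicIrred_le (d : ℕ) (hd : d ≠ 0) :
    (numMonicIrred F d : ℝ) ≤ (Fintype.card F : ℝ) ^ d := by
  have h := key_identity (F := F) d hd
  have h1 : d * numMonicIrred F d ≤ Fintype.card F ^ d := by
    rw [← h]
    exact Finset.single_le_sum (f := fun e => e * numMonicIrred F e)
      (fun i _ => Nat.zero_le _) (Nat.mem_divisors_self d hd)
  have h2 : numMonicIrred F d ≤ Fintype.card F ^ d :=
    le_trans (Nat.le_mul_of_pos_left _ (Nat.pos_of_ne_zero hd)) h1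
  exact_mod_cast h2

end Analytic
/-- For a finite field with `q` elements, and real `u` with `|u| < 1`, the infinite product
`∏_{d=1}^∞ (1 − (u/q)^d)^{N_d(q)}` converges and equals `1 − u`. -/
theorem prod_irreducible_eq_one_sub {F : Type} [Field F] [Fintype F] (q : ℕ)
    (hq : Fintype.card F = q) (u : ℝ) (hu : |u| < 1) :
    Multipliable (fun d : ℕ => (1 - (u / q) ^ (d + 1)) ^ numMonicIrred F (d + 1)) ∧
    ∏' d : ℕ, (1 - (u / q) ^ (d + 1)) ^ numMonicIrred F (d + 1) = 1 - u := by
  subst hq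
  have hq2 : (2:ℝ) ≤ (Fintype.card F : ℝ) := by exact_mod_cast Fintype.one_lt_card
  set Q : ℝ := ((Fintype.card F : ℕ) : ℝ) with hQ
  set t : ℝ := u / Q with htdef
  have hQ0 : (0:ℝ) < Q := by linarith
  have hqt : Q * t = u := by rw [htdef]; field_simp
  have htabs : |t| ≤ |u| := by
    rw [htdef, abs_div, abs_of_pos hQ0]
    exact div_le_self (abs_nonneg u) (by linarith)
  have ht : |t| < 1 := lt_of_le_of_lt htabs hu
  have hr0 : (0:ℝ) ≤ |u| := abs_nonneg u
  have hpos : ∀ i : ℕ, 0 < 1 - t ^ (i + 1) := by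
    intro i
    have h1 : |t ^ (i+1)| < 1 := by
      rw [abs_pow]
      exact pow_lt_one₀ (abs_nonneg t) ht (Nat.succ_ne_zero i)
    have := (abs_lt.mp h1).2
    linarith
  set N : ℕ → ℕ := numMonicIrred F with hN
  have hN0 : N 0 = 0 := numMonicIrred_zero
  set f : ℕ × ℕ → ℝ := fun p => (N p.1 : ℝ) * t ^ (p.1 * p.2) / (p.2 : ℝ) with hf
  set r : ℝ := |u| with hrdef
  have hQt : Q * |t| = r := by
    rw [hrdef, ← hqt, abs_mul, abs_of_pos hQ0]
  set g : ℕ × ℕ → ℝ := fun p => if p.1 = 0 ∨ p.2 = 0 then (0:ℝ) else r ^ (p.1 * p.2) with hg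
  have hbound : ∀ p : ℕ × ℕ, ‖f p‖ ≤ g p := by
    rintro ⟨i, j⟩
    by_cases hij : i = 0 ∨ j = 0
    · rw [hg]; simp only [if_pos hij]
      rcases hij with rfl | rfl
      · simp [hf, hN0]
      · simp [hf]
    · rw [hg]; simp only [if_neg hij]
      push_neg at hij
      obtain ⟨hi, hj⟩ := hij
      have hj1 : (1:ℝ) ≤ (j:ℝ) := by exact_mod_cast Nat.one_le_iff_ne_zero.mpr hj
      have h2 : (N i : ℝ) ≤ Q ^ i := numMonicIrred_le i hi
      have h3 : Q ^ i ≤ Q ^ (i * j) :=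
        pow_le_pow_right₀ (by linarith) (Nat.le_mul_of_pos_right i (Nat.pos_of_ne_zero hj))
      have key : (N i : ℝ) * |t| ^ (i*j) / (j:ℝ) ≤ r ^ (i * j) := by
        calc (N i : ℝ) * |t| ^ (i*j) / (j:ℝ) ≤ (N i : ℝ) * |t| ^ (i*j) :=
              div_le_self (by positivity) hj1
          _ ≤ Q ^ (i*j) * |t| ^ (i*j) :=
              mul_le_mul_of_nonneg_right (h2.trans h3) (by positivity)
          _ = (Q * |t|) ^ (i*j) := (mul_pow _ _ _).symm
          _ = r ^ (i*j) := by rw [hQt]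
      simpa [hf, Real.norm_eq_abs, abs_div, abs_mul, abs_pow] using key
  have hgsum : Summable g := by
    have hemb : Function.Injective (fun p : ℕ × ℕ => (p.1 + 1, p.2 + 1)) := by
      intro a b h
      simp only [Prod.mk.injEq, Prod.ext_iff] at h ⊢
      omega
    rw [← Function.Injective.summable_iff hemb ?_]
    · have hcomp : (g ∘ fun p : ℕ × ℕ => (p.1 + 1, p.2 + 1))
          = fun p : ℕ × ℕ => r ^ ((p.1+1)*(p.2+1)) := by
        funext p; simp [hg]
      rw [hcomp]
      have hmaj : ∀ p : ℕ × ℕ, r ^ ((p.1+1)*(p.2+1)) ≤ (r ^ p.1 * r ^ p.2) * r := by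
        intro p
        have hle : p.1 + p.2 + 1 ≤ (p.1+1)*(p.2+1) := by nlinarith
        calc r ^ ((p.1+1)*(p.2+1)) ≤ r ^ (p.1 + p.2 + 1) :=
              pow_le_pow_of_le_one hr0 hu.le hle
          _ = (r ^ p.1 * r ^ p.2) * r := by ring
      refine Summable.of_nonneg_of_le (fun p => by positivity) hmaj ?_
      exact ((summable_geometric_of_lt_one hr0 hu).mul_of_nonneg
        (summable_geometric_of_lt_one hr0 hu) (fun n => by positivity)
        (fun n => by positivity)).mul_right r
    · intro p hp
      rw [hg]
      simp only
      refine if_pos ?_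
      by_contra hcon
      push_neg at hcon
      exact hp ⟨(p.1 - 1, p.2 - 1), by
        simp only [Prod.ext_iff]
        omega⟩
  have hfsum : Summable f := Summable.of_norm_bounded hgsum hbound
  set L : ℝ := ∑' p, f p with hL
  have hfL : HasSum f L := hfsum.hasSum
  -- fiberwise over multiplication
  have hmul := hfL.tsum_fiberwise (fun p => p.1 * p.2)
  have hmul_eq : ∀ n : ℕ, (∑' (b : ((fun p : ℕ × ℕ => p.1 * p.2) ⁻¹' {n} : Set (ℕ × ℕ))), f b)
      = u ^ n / (n : ℝ) := by
    intro n
    rcases eq_or_ne n 0 with rfl | hn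
    · have hz : ∀ b : ((fun p : ℕ × ℕ => p.1 * p.2) ⁻¹' {0} : Set (ℕ × ℕ)), f (b : ℕ × ℕ) = 0 := by
        rintro ⟨⟨i, j⟩, hb⟩
        simp only [Set.mem_preimage, Set.mem_singleton_iff, Nat.mul_eq_zero] at hb
        rcases hb with rfl | rfl
        · simp [hf, hN0]
        · simp [hf]
      rw [tsum_congr hz]
      simp
    · rw [show ((fun p : ℕ × ℕ => p.1 * p.2) ⁻¹' {n} : Set (ℕ × ℕ))
          = ↑(n.divisorsAntidiagonal) by ext p; simp [Nat.mem_divisorsAntidiagonal, hn],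
        Finset.tsum_subtype' n.divisorsAntidiagonal f]
      have hterm : ∀ p ∈ n.divisorsAntidiagonal,
          f p = (t ^ n / (n:ℝ)) * ((p.1 * N p.1 : ℕ) : ℝ) := by
        intro p hp
        obtain ⟨hpn, hn0⟩ := Nat.mem_divisorsAntidiagonal.mp hp
        have hp2 : p.2 ≠ 0 := by
          intro h; rw [h, mul_zero] at hpn; exact hn hpn.symm
        have hp2R : (p.2 : ℝ) ≠ 0 := by exact_mod_cast hp2
        have hnR : (n : ℝ) ≠ 0 := by exact_mod_cast hn
        have hmulR : (p.1 : ℝ) * (p.2 : ℝ) = (n : ℝ) := by exact_mod_cast hpn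
        rw [hf]
        simp only [hpn]
        push_cast
        field_simp
        linear_combination (-1 * (N p.1 : ℝ) * u ^ n * Q⁻¹ ^ n) * hmulR
      rw [Finset.sum_congr rfl hterm, ← Finset.mul_sum, ← Nat.cast_sum]
      have : ∑ p ∈ n.divisorsAntidiagonal, p.1 * N p.1
          = ∑ d ∈ n.divisors, d * N d := Nat.sum_divisorsAntidiagonal (fun i _ => i * N i)
      rw [this, hN, key_identity n hn]
      push_cast
      rw [div_mul_eq_mul_div, ← mul_pow, mul_comm t Q, hqt]
  have hmul' : HasSum (fun n : ℕ => u ^ n / (n : ℝ)) L := by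
    rw [show (fun n : ℕ => u ^ n / (n : ℝ))
        = fun n : ℕ => ∑' (b : ((fun p : ℕ × ℕ => p.1 * p.2) ⁻¹' {n} : Set (ℕ × ℕ))), f b
      from funext fun n => (hmul_eq n).symm]
    exact hmul
  have habs : |u| < 1 := hu
  have hL_eq : L = -Real.log (1 - u) := by
    have hlog : HasSum (fun n : ℕ => u ^ (n+1) / ((n : ℝ)+1)) (-Real.log (1-u)) :=
      Real.hasSum_pow_div_log_of_abs_lt_one habs
    have hshift : HasSum (fun n : ℕ => u ^ (n+1) / (((n+1 : ℕ)) : ℝ)) (-Real.log (1-u)) := by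
      refine hlog.congr_fun fun n => ?_
      push_cast; ring_nf
    have h2 := (hasSum_nat_add_iff (f := fun n : ℕ => u ^ n / (n : ℝ)) 1).mp hshift
    simp only [Finset.sum_range_one, Nat.cast_zero, div_zero, add_zero] at h2
    exact hmul'.unique h2
  -- fiberwise over the first coordinate
  have hfst := hfL.tsum_fiberwise Prod.fst
  set G : ℕ → ℝ := fun i => -((N i : ℝ) * Real.log (1 - t ^ i)) with hG
  have hfst_eq : ∀ i : ℕ, (∑' (b : (Prod.fst ⁻¹' {i} : Set (ℕ × ℕ))), f (b : ℕ × ℕ)) = G i := by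
    intro i
    have he : (∑' (b : (Prod.fst ⁻¹' {i} : Set (ℕ × ℕ))), f (b : ℕ × ℕ)) = ∑' j : ℕ, f (i, j) := by
      let e : ℕ ≃ (Prod.fst ⁻¹' {i} : Set (ℕ × ℕ)) :=
        { toFun := fun j => ⟨(i, j), rfl⟩
          invFun := fun b => (b : ℕ × ℕ).2
          left_inv := fun j => rfl
          right_inv := by
            rintro ⟨⟨a, j⟩, hb⟩
            simp only [Set.mem_preimage, Set.mem_singleton_iff] at hb
            subst hb
            rfl }
      exact (Equiv.tsum_eq e (fun b => f (b : ℕ × ℕ))).symm.trans (tsum_congr fun j => rfl)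
    rcases eq_or_ne i 0 with rfl | hi
    · rw [he]
      have : ∀ j : ℕ, f (0, j) = 0 := fun j => by simp [hf, hN0]
      rw [tsum_congr this]
      simp [hG, hN0]
    · have hx : |t ^ i| < 1 := by
        rw [abs_pow]; exact pow_lt_one₀ (abs_nonneg t) ht hi
      have hlog : HasSum (fun j : ℕ => (t ^ i) ^ (j+1) / ((j:ℝ)+1)) (-Real.log (1 - t ^ i)) :=
        Real.hasSum_pow_div_log_of_abs_lt_one hx
      have h1 : HasSum (fun j : ℕ => f (i, j+1)) ((N i : ℝ) * -Real.log (1 - t ^ i)) := by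
        refine (hlog.mul_left (N i : ℝ)).congr_fun fun j => ?_
        rw [hf]
        simp only
        rw [← pow_mul]
        push_cast
        ring
      have h2 := (hasSum_nat_add_iff (f := fun j : ℕ => f (i, j)) 1).mp h1
      have h3 : (∑ j ∈ Finset.range 1, f (i, j)) = 0 := by simp [hf]
      rw [he, h2.tsum_eq, h3, add_zero, hG, mul_neg]
  have hGL : HasSum G (-Real.log (1 - u)) := by
    rw [← hL_eq, show G = fun i => ∑' (b : (Prod.fst ⁻¹' {i} : Set (ℕ × ℕ))), f (b : ℕ × ℕ)
      from funext fun i => (hfst_eq i).symm]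
    exact hfst
  have hG0 : G 0 = 0 := by simp [hG, hN0]
  have hGshift : HasSum (fun n : ℕ => G (n+1)) (-Real.log (1-u)) := by
    refine (hasSum_nat_add_iff 1).mpr ?_
    simpa [Finset.sum_range_one, hG0] using hGL
  have hlogsum : HasSum (fun n : ℕ => (N (n+1) : ℝ) * Real.log (1 - t ^ (n+1)))
      (Real.log (1-u)) := by
    have := hGshift.neg
    simp only [hG, neg_neg] at this
    simpa using this
  have hprod := hlogsum.rexp
  have h1u : (0:ℝ) < 1 - u := by
    have := (abs_lt.mp habs).2
    linarith
  have hfuneq : (Real.exp ∘ fun n : ℕ => (N (n+1) : ℝ) * Real.log (1 - t ^ (n+1)))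
      = fun d : ℕ => (1 - t ^ (d+1)) ^ (N (d+1)) := by
    funext d
    simp only [Function.comp_apply]
    rw [Real.exp_nat_mul, Real.exp_log (hpos d)]
  rw [hfuneq, Real.exp_log h1u] at hprod
  exact ⟨hprod.multipliable, hprod.tprod_eq⟩
end

section
/- Let q > 1 and 0 < u < 1 be real numbers. For a partition λ, let λ'_i denote the i-th part of the conjugate partition, let m_i(λ) be the number of parts of λ equal to i, and let (1/q)_m = ∏_{j=1}^m (1 − q^{−j}). Then the sum over all partitions λ of all nonnegative integers of u^{|λ|} / (q^{∑_i (λ'_i)²} · ∏_{i≥1} (1/q)_{m_i(λ)}) equals ∏_{r=1}^∞ 1/(1 − u/q^r). -/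
/-- `(x)_m = ∏_{j=1}^m (1 − x·q^{−j})`. -/
noncomputable def qPoch (q x : ℝ) (m : ℕ) : ℝ := ∏ j ∈ Finset.range m, (1 - x * q⁻¹ ^ (j + 1))

/-- `λ'_i`, the `i`-th part of the conjugate partition: the number of parts of `λ` of size
at least `i`. -/
def conjPart {n : ℕ} (lam : Nat.Partition n) (i : ℕ) : ℕ :=
  (lam.parts.filter (fun j => i ≤ j)).card

open Finset Filter Topology

noncomputable def poch (t : ℝ) (m : ℕ) : ℝ := ∏ j ∈ Finset.range m, (1 - t ^ (j + 1))

section pochB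
variable {t : ℝ} (ht0 : 0 < t) (ht1 : t < 1)

lemma poch_zero : poch t 0 = 1 := by simp [poch]

lemma poch_succ (m : ℕ) : poch t (m + 1) = poch t m * (1 - t ^ (m + 1)) := by
  simp [poch, Finset.prod_range_succ]

include ht0 ht1 in
lemma one_sub_pow_pos {m : ℕ} (hm : 1 ≤ m) : 0 < 1 - t ^ m := by
  have : t ^ m < 1 := pow_lt_one₀ ht0.le ht1 (by omega)
  linarith

include ht0 ht1 in
lemma poch_pos (m : ℕ) : 0 < poch t m := by
  apply Finset.prod_pos
  intro j _
  exact one_sub_pow_pos ht0 ht1 (by omega)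

include ht0 ht1 in
lemma poch_ne (m : ℕ) : poch t m ≠ 0 := (poch_pos ht0 ht1 m).ne'

include ht0 ht1 in
lemma poch_le_one (m : ℕ) : poch t m ≤ 1 := by
  induction m with
  | zero => simp [poch_zero]
  | succ k ih =>
    rw [poch_succ]
    have h1 : 0 < 1 - t ^ (k + 1) := one_sub_pow_pos ht0 ht1 (by omega)
    nlinarith [poch_pos ht0 ht1 k, pow_nonneg ht0.le (k + 1)]

/-- Gaussian binomial coefficient, as a real number. -/
noncomputable def gB (t : ℝ) (n k : ℕ) : ℝ :=
  if k ≤ n then poch t n / (poch t k * poch t (n - k)) else 0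

include ht0 ht1 in
lemma gB_zero_right (n : ℕ) : gB t n 0 = 1 := by
  simp [gB, poch_zero, div_self (poch_ne ht0 ht1 n)]

include ht0 ht1 in
lemma gB_self (n : ℕ) : gB t n n = 1 := by
  simp [gB, poch_zero, div_self (poch_ne ht0 ht1 n)]

lemma gB_eq_zero {n k : ℕ} (h : n < k) : gB t n k = 0 := by
  simp [gB, Nat.not_le.2 h]

lemma gB_eq (n k : ℕ) (h : k ≤ n) : gB t n k = poch t n / (poch t k * poch t (n - k)) := by
  simp [gB, h]

include ht0 ht1 in
lemma gB_pascal (n k : ℕ) :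
    gB t (n + 1) (k + 1) = gB t n (k + 1) + t ^ (n - k) * gB t n k := by
  rcases lt_trichotomy k n with h | rfl | h
  · have hX : (1 : ℝ) - t ^ (k + 1) ≠ 0 := (one_sub_pow_pos ht0 ht1 (by omega)).ne'
    have hY : (1 : ℝ) - t ^ (n - k) ≠ 0 := (one_sub_pow_pos ht0 ht1 (by omega)).ne'
    have hp1 : poch t (n + 1) = poch t n * (1 - t ^ (k + 1) * t ^ (n - k)) := by
      rw [poch_succ, ← pow_add, show k + 1 + (n - k) = n + 1 from by omega]
    have hp2 : poch t (n - k) = poch t (n - k - 1) * (1 - t ^ (n - k)) := by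
      conv_lhs => rw [show n - k = (n - k - 1) + 1 from by omega]
      rw [poch_succ, show n - k - 1 + 1 = n - k from by omega]
    have hp3 : poch t (k + 1) = poch t k * (1 - t ^ (k + 1)) := poch_succ k
    rw [gB, gB, gB, if_pos (by omega : k + 1 ≤ n + 1), if_pos (by omega : k + 1 ≤ n),
      if_pos (by omega : k ≤ n), show n + 1 - (k + 1) = n - k from by omega,
      show n - (k + 1) = n - k - 1 from by omega, hp1, hp2, hp3]
    have e1 := poch_ne ht0 ht1 k
    have e2 := poch_ne ht0 ht1 (n - k - 1)
    field_simp
    ring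
  · rw [gB_self ht0 ht1, gB_self ht0 ht1, gB_eq_zero (by omega)]
    simp
  · rw [gB_eq_zero (by omega), gB_eq_zero (by omega), gB_eq_zero (by omega)]
    simp

end pochB

section vdm
variable {t : ℝ} (ht0 : 0 < t) (ht1 : t < 1)

include ht0 ht1 in
lemma vdmA (m k : ℕ) : ∀ r : ℕ,
    gB t (m + k) r = ∑ i ∈ range (r + 1), t ^ (i * (k + i - r)) * gB t m i * gB t k (r - i) := by
  induction m with
  | zero =>
    intro r
    rw [Finset.sum_eq_single_of_mem 0 (by simp)]
    · simp [gB_zero_right ht0 ht1]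
    · intro i _ hi
      rw [gB_eq_zero (Nat.pos_of_ne_zero hi)]
      ring
  | succ m ih =>
    intro r
    cases r with
    | zero => simp [gB_zero_right ht0 ht1]
    | succ s =>
      have LHS : gB t (m + 1 + k) (s + 1) = gB t (m + k) (s + 1) + t ^ (m + k - s) * gB t (m + k) s := by
        rw [show m + 1 + k = (m + k) + 1 from by omega]
        exact gB_pascal ht0 ht1 (m + k) s
      rw [LHS, ih (s + 1), ih s, Finset.sum_range_succ' _ (s + 1),
        Finset.sum_range_succ' (fun i => t ^ (i * (k + i - (s + 1))) * gB t (m + 1) i * gB t k (s + 1 - i)) (s + 1)]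
      simp only [Nat.zero_mul, pow_zero, one_mul, Nat.sub_zero, gB_zero_right ht0 ht1, mul_one]
      rw [add_right_comm, Finset.mul_sum, ← Finset.sum_add_distrib]
      congr 1
      apply Finset.sum_congr rfl
      intro i hi
      have hi' : i ≤ s := by simpa [Nat.lt_succ_iff] using hi
      rw [gB_pascal ht0 ht1 m i]
      have e1 : k + (i + 1) - (s + 1) = k + i - s := by omega
      have e2 : s + 1 - (i + 1) = s - i := by omega
      rw [e1, e2, mul_add, add_mul, add_mul]
      congr 1
      by_cases h1 : i ≤ m
      · by_cases h2 : s - i ≤ k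
        · rw [← mul_assoc, ← mul_assoc, ← mul_assoc]
          congr 2
          rw [← pow_add, ← pow_add]
          congr 1
          simp only [add_mul, one_mul]
          generalize hD : k + i - s = D
          omega
        · rw [gB_eq_zero (by omega : k < s - i)]
          ring
      · rw [gB_eq_zero (by omega : m < i)]
        ring
include ht0 ht1 in
lemma vdmUse {n : ℕ} (hn : 1 ≤ n) (k : ℕ) :
    ∑ j ∈ Icc 1 (min n k), t ^ (j ^ 2) * (t ^ (n - j) * gB t (n - 1) (n - j) / poch t j) / poch t (k - j)
      = t ^ n * gB t (n + k - 1) n / poch t k := by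
  have base := vdmA ht0 ht1 k (n - 1) n
  rw [show k + (n - 1) = n + k - 1 from by omega] at base
  rw [base, Finset.mul_sum, Finset.sum_div]
  rw [← Finset.sum_subset (by intro j hj; simp only [mem_Icc, mem_range, Nat.le_min] at *; omega :
      Icc 1 (min n k) ⊆ range (n + 1))
    (by
      intro i hi hni
      simp only [mem_Icc, mem_range, Nat.lt_succ_iff, Nat.le_min] at hi hni
      rcases Nat.eq_zero_or_pos i with rfl | hipos
      · rw [gB_eq_zero (by omega : n - 1 < n - 0)]
        ring
      · have hik : k < i := by omega
        rw [gB_eq_zero hik]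
        ring)]
  apply Finset.sum_congr rfl
  intro j hj
  simp only [mem_Icc, Nat.le_min] at hj
  obtain ⟨hj1, hjn, hjk⟩ := hj
  have hje : n - 1 + j - n = j - 1 := by omega
  rw [hje, gB_eq k j hjk]
  have hsq : j * (j - 1) + j = j ^ 2 := by
    cases j with
    | zero => simp
    | succ a => simp [Nat.succ_sub_one]; ring
  have hexp : n + j * (j - 1) = j ^ 2 + (n - j) := by
    rw [← hsq]; generalize j * (j - 1) = X; omega
  have n1 := poch_ne ht0 ht1 k
  have n2 := poch_ne ht0 ht1 j
  have n3 := poch_ne ht0 ht1 (k - j)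
  have hpow : t ^ (j ^ 2) * t ^ (n - j) = t ^ n * t ^ (j * (j - 1)) := by
    rw [← pow_add, ← pow_add, hexp]
  field_simp
  linear_combination (gB t (n - 1) (n - j)) * hpow

end vdm

def strip (P : Multiset ℕ) : Multiset ℕ := (P.map (fun x => x - 1)).filter (· ≠ 0)

def unstrip (R : Multiset ℕ) (m : ℕ) : Multiset ℕ :=
  R.map (fun x => x + 1) + Multiset.replicate m 1

lemma card_le_sum (P : Multiset ℕ) (hP : ∀ x ∈ P, 0 < x) : Multiset.card P ≤ P.sum := by
  induction P using Multiset.induction with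
  | empty => simp
  | cons a S ih =>
    simp only [Multiset.card_cons, Multiset.sum_cons]
    have h1 : 0 < a := hP a (Multiset.mem_cons_self a S)
    have h2 : Multiset.card S ≤ S.sum := ih (fun x hx => hP x (Multiset.mem_cons_of_mem hx))
    omega

lemma strip_sum (P : Multiset ℕ) (hP : ∀ x ∈ P, 0 < x) :
    (strip P).sum = P.sum - Multiset.card P := by
  unfold strip
  induction P using Multiset.induction with
  | empty => simp
  | cons a S ih =>
    have h1 : 0 < a := hP a (Multiset.mem_cons_self a S)
    have h2 := ih (fun x hx => hP x (Multiset.mem_cons_of_mem hx))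
    have h3 := card_le_sum S (fun x hx => hP x (Multiset.mem_cons_of_mem hx))
    simp only [Multiset.map_cons, Multiset.card_cons, Multiset.sum_cons]
    by_cases ha : a - 1 = 0
    · rw [Multiset.filter_cons_of_neg _ (by simpa using ha)]
      omega
    · rw [Multiset.filter_cons_of_pos _ (by simpa using ha), Multiset.sum_cons, h2]
      omega

lemma strip_card (P : Multiset ℕ) (hP : ∀ x ∈ P, 0 < x) :
    Multiset.card (strip P) = Multiset.card P - Multiset.count 1 P := by
  unfold strip
  induction P using Multiset.induction with
  | empty => simp
  | cons a S ih =>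
    have h1 : 0 < a := hP a (Multiset.mem_cons_self a S)
    have h2 := ih (fun x hx => hP x (Multiset.mem_cons_of_mem hx))
    have h4 : Multiset.count 1 S ≤ Multiset.card S := Multiset.count_le_card 1 S
    simp only [Multiset.map_cons, Multiset.card_cons, Multiset.count_cons]
    by_cases ha1 : a = 1
    · rw [Multiset.filter_cons_of_neg _ (by simp [ha1]), h2, if_pos (by omega)]
      omega
    · rw [Multiset.filter_cons_of_pos _ (by simp; omega), Multiset.card_cons, h2,
        if_neg (by omega)]
      omega

lemma strip_count (P : Multiset ℕ) {i : ℕ} (hi : 1 ≤ i) :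
    Multiset.count i (strip P) = Multiset.count (i + 1) P := by
  unfold strip
  rw [Multiset.count_filter, if_pos (by omega : i ≠ 0), Multiset.count_map,
    Multiset.count_eq_card_filter_eq]
  congr 1
  apply Multiset.filter_congr
  intro x _
  omega

lemma strip_conj (P : Multiset ℕ) {i : ℕ} (hi : 1 ≤ i) :
    Multiset.card ((strip P).filter (fun x => i ≤ x)) =
      Multiset.card (P.filter (fun x => i + 1 ≤ x)) := by
  unfold strip
  rw [Multiset.filter_filter, Multiset.filter_map, Multiset.card_map]
  congr 1
  apply Multiset.filter_congr
  intro x _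
  simp only [Function.comp_apply, ne_eq]
  omega

lemma strip_pos (P : Multiset ℕ) : ∀ x ∈ strip P, 0 < x := by
  intro x hx
  unfold strip at hx
  have := Multiset.of_mem_filter hx
  omega

lemma unstrip_pos (R : Multiset ℕ) (m : ℕ) : ∀ x ∈ unstrip R m, 0 < x := by
  intro x hx
  unfold unstrip at hx
  rcases Multiset.mem_add.1 hx with h | h
  · obtain ⟨y, _, rfl⟩ := Multiset.mem_map.1 h
    omega
  · rw [Multiset.eq_of_mem_replicate h]
    omega

lemma unstrip_sum (R : Multiset ℕ) (m : ℕ) :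
    (unstrip R m).sum = R.sum + Multiset.card R + m := by
  unfold unstrip
  rw [Multiset.sum_add, Multiset.sum_replicate, smul_eq_mul, mul_one]
  have : (R.map (fun x => x + 1)).sum = R.sum + Multiset.card R := by
    induction R using Multiset.induction with
    | empty => simp
    | cons a S ih =>
      simp only [Multiset.map_cons, Multiset.sum_cons, Multiset.card_cons, ih]
      omega
  omega

lemma unstrip_card (R : Multiset ℕ) (m : ℕ) :
    Multiset.card (unstrip R m) = Multiset.card R + m := by
  simp [unstrip]

lemma strip_unstrip (R : Multiset ℕ) (m : ℕ) (hR : ∀ x ∈ R, 0 < x) :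
    strip (unstrip R m) = R := by
  unfold strip unstrip
  rw [Multiset.map_add, Multiset.map_map, Multiset.filter_add]
  have h1 : (R.map ((fun x => x - 1) ∘ fun x => x + 1)) = R := by
    rw [show ((fun x => x - 1) ∘ fun x : ℕ => x + 1) = id from by funext x; simp]
    exact Multiset.map_id R
  rw [h1, Multiset.map_replicate]
  have h3 : ((Multiset.replicate m (1 - 1)).filter (· ≠ 0)) = 0 := by
    rw [Multiset.filter_eq_nil]
    intro a ha
    rw [Multiset.eq_of_mem_replicate ha]
    simp
  rw [h3, add_zero, Multiset.filter_eq_self]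
  intro a ha
  exact (hR a ha).ne'

lemma unstrip_strip (P : Multiset ℕ) (hP : ∀ x ∈ P, 0 < x) :
    unstrip (strip P) (Multiset.count 1 P) = P := by
  unfold unstrip strip
  have h1 : ((P.map (fun x => x - 1)).filter (· ≠ 0)) =
      (P.filter (fun x => x ≠ 1)).map (fun x => x - 1) := by
    rw [Multiset.filter_map]
    congr 1
    apply Multiset.filter_congr
    intro x hx
    have := hP x hx
    simp only [Function.comp_apply, ne_eq]
    omega
  rw [h1, Multiset.map_map]
  have h2 : ((P.filter (fun x => x ≠ 1)).map ((fun x => x + 1) ∘ fun x => x - 1)) =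
      P.filter (fun x => x ≠ 1) := by
    rw [Multiset.map_congr rfl (fun x hx => ?_), Multiset.map_id]
    have hx1 : x ≠ 1 := (Multiset.mem_filter.1 hx).2
    have hx0 : 0 < x := hP x (Multiset.mem_of_mem_filter hx)
    simp only [Function.comp_apply, id_eq]
    omega
  rw [h2]
  have h3 : P.filter (fun x => ¬ x ≠ 1) = Multiset.replicate (Multiset.count 1 P) 1 := by
    rw [Multiset.filter_congr (fun x _ => not_not)]
    exact Multiset.filter_eq' P 1
  rw [← h3]
  exact Multiset.filter_add_not _ P

section partitionLayer
variable {t : ℝ} (ht0 : 0 < t) (ht1 : t < 1)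

/-- the weight of a partition -/
noncomputable def W (t : ℝ) (n : ℕ) (lam : Nat.Partition n) : ℝ :=
  t ^ (∑ i ∈ Icc 1 n, conjPart lam i ^ 2) / ∏ i ∈ Icc 1 n, poch t (Multiset.count i lam.parts)

noncomputable def Gsum (t : ℝ) (n k : ℕ) : ℝ :=
  ∑ rho ∈ univ.filter (fun rho : Nat.Partition n => rho.parts.card ≤ k),
    W t n rho / poch t (k - rho.parts.card)

lemma partition_parts_pos {n : ℕ} (lam : Nat.Partition n) : ∀ x ∈ lam.parts, 0 < x :=
  fun _ hx => lam.parts_pos hx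

lemma part_le {n : ℕ} (lam : Nat.Partition n) {x : ℕ} (hx : x ∈ lam.parts) : x ≤ n :=
  (Multiset.le_sum_of_mem hx).trans_eq lam.parts_sum

lemma partition_card_le {n : ℕ} (lam : Nat.Partition n) : Multiset.card lam.parts ≤ n :=
  (card_le_sum _ (partition_parts_pos lam)).trans_eq lam.parts_sum

lemma partition_card_pos {n : ℕ} (hn : 1 ≤ n) (lam : Nat.Partition n) :
    1 ≤ Multiset.card lam.parts := by
  by_contra h
  have hc : lam.parts = 0 := Multiset.card_eq_zero.1 (by omega)
  have hs := lam.parts_sum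
  rw [hc] at hs
  simp at hs
  omega

lemma conjPart_eq_zero {n : ℕ} (lam : Nat.Partition n) {i : ℕ} (hi : n < i) :
    conjPart lam i = 0 := by
  unfold conjPart
  rw [Multiset.card_eq_zero, Multiset.filter_eq_nil]
  intro x hx
  have := part_le lam hx
  omega

lemma count_eq_zero_of_gt {n : ℕ} (lam : Nat.Partition n) {i : ℕ} (hi : n < i) :
    Multiset.count i lam.parts = 0 := by
  rw [Multiset.count_eq_zero]
  intro hx
  have := part_le lam hx
  omega

lemma conjPart_one {n : ℕ} (lam : Nat.Partition n) :
    conjPart lam 1 = Multiset.card lam.parts := by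
  unfold conjPart
  congr 1
  rw [Multiset.filter_eq_self]
  intro x hx
  exact lam.parts_pos hx

/-- remove the first column -/
def stripPart {n m j : ℕ} (hm : n = m + j) (lam : Nat.Partition n)
    (hcard : Multiset.card lam.parts = j) : Nat.Partition m where
  parts := strip lam.parts
  parts_pos := fun {i} h => strip_pos _ i h
  parts_sum := by
    rw [strip_sum _ (partition_parts_pos lam), lam.parts_sum, hcard]
    omega

/-- add back a first column -/
def unstripPart {n m j : ℕ} (hm : n = m + j) (rho : Nat.Partition m)
    (hc : Multiset.card rho.parts ≤ j) : Nat.Partition n where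
  parts := unstrip rho.parts (j - Multiset.card rho.parts)
  parts_pos := fun {i} h => unstrip_pos _ _ i h
  parts_sum := by
    rw [unstrip_sum, rho.parts_sum]
    omega

include ht0 ht1 in
lemma W_strip {n m j : ℕ} (hm : n = m + j) (hj1 : 1 ≤ j)
    (lam : Nat.Partition n) (hcard : Multiset.card lam.parts = j)
    (rho : Nat.Partition m) (hrho : rho.parts = strip lam.parts) :
    W t n lam = t ^ (j ^ 2) * (W t m rho / poch t (j - Multiset.card rho.parts)) := by
  have hn : 1 ≤ n := by omega
  have hjn : j ≤ n := by omega
  have hcount1 : Multiset.count 1 lam.parts ≤ j := by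
    rw [← hcard]; exact Multiset.count_le_card 1 lam.parts
  have hrcard : Multiset.card rho.parts = j - Multiset.count 1 lam.parts := by
    rw [hrho, strip_card _ (partition_parts_pos lam), hcard]
  have hc1 : j - Multiset.card rho.parts = Multiset.count 1 lam.parts := by omega
  -- exponent
  have conj_rel : ∀ i, 1 ≤ i → conjPart lam (i + 1) = conjPart rho i := by
    intro i hi
    unfold conjPart
    rw [hrho, strip_conj _ hi]
  have Esum : ∑ i ∈ Icc 1 n, conjPart lam i ^ 2
      = j ^ 2 + ∑ i ∈ Icc 1 m, conjPart rho i ^ 2 := by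
    rw [← Finset.sum_erase_add _ _ (Finset.mem_Icc.2 ⟨le_refl 1, hn⟩), Finset.Icc_erase_left,
      conjPart_one, hcard]
    rw [add_comm]
    congr 1
    -- ∑ i ∈ Ioc 1 n, conjPart lam i ^2 = ∑ i ∈ Icc 1 m, conjPart rho i ^ 2
    have h1 : Finset.Ioc 1 n = Finset.map (addRightEmbedding 1) (Finset.Ioc 0 (n - 1)) := by
      rw [Finset.map_add_right_Ioc]
      congr 1 <;> omega
    rw [h1, Finset.sum_map]
    have h2 : ∀ i ∈ Finset.Ioc 0 (n - 1), conjPart lam (addRightEmbedding 1 i) ^ 2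
        = conjPart rho i ^ 2 := by
      intro i hi
      simp only [Finset.mem_Ioc] at hi
      rw [show ((addRightEmbedding 1) i : ℕ) = i + 1 from rfl, conj_rel i hi.1]
    rw [Finset.sum_congr rfl h2]
    rw [show Finset.Ioc 0 (n-1) = Finset.Icc 1 (n-1) from by rw [← Finset.Icc_add_one_left_eq_Ioc, zero_add]]
    symm
    apply Finset.sum_subset
    · intro i hi
      simp only [Finset.mem_Icc] at *
      omega
    · intro i hi hni
      simp only [Finset.mem_Icc] at hi hni
      have : m < i := by omega
      rw [conjPart_eq_zero rho this]
      simp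
  -- denominator
  have count_rel : ∀ i, 1 ≤ i → Multiset.count (i + 1) lam.parts = Multiset.count i rho.parts := by
    intro i hi
    rw [hrho, strip_count _ hi]
  have Dprod : ∏ i ∈ Icc 1 n, poch t (Multiset.count i lam.parts)
      = poch t (Multiset.count 1 lam.parts) * ∏ i ∈ Icc 1 m, poch t (Multiset.count i rho.parts) := by
    rw [← Finset.prod_erase_mul _ _ (Finset.mem_Icc.2 ⟨le_refl 1, hn⟩), Finset.Icc_erase_left]
    rw [mul_comm]
    congr 1
    have h1 : Finset.Ioc 1 n = Finset.map (addRightEmbedding 1) (Finset.Ioc 0 (n - 1)) := by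
      rw [Finset.map_add_right_Ioc]
      congr 1 <;> omega
    rw [h1, Finset.prod_map]
    have h2 : ∀ i ∈ Finset.Ioc 0 (n - 1), poch t (Multiset.count ((addRightEmbedding 1) i) lam.parts)
        = poch t (Multiset.count i rho.parts) := by
      intro i hi
      simp only [Finset.mem_Ioc] at hi
      rw [show ((addRightEmbedding 1) i : ℕ) = i + 1 from rfl, count_rel i hi.1]
    rw [Finset.prod_congr rfl h2]
    rw [show Finset.Ioc 0 (n-1) = Finset.Icc 1 (n-1) from by rw [← Finset.Icc_add_one_left_eq_Ioc, zero_add]]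
    symm
    apply Finset.prod_subset
    · intro i hi
      simp only [Finset.mem_Icc] at *
      omega
    · intro i hi hni
      simp only [Finset.mem_Icc] at hi hni
      have : m < i := by omega
      rw [count_eq_zero_of_gt rho this, poch_zero]
  -- put together
  unfold W
  rw [Esum, Dprod, hc1, pow_add]
  have n1 : poch t (Multiset.count 1 lam.parts) ≠ 0 := poch_ne ht0 ht1 _
  have n2 : (∏ i ∈ Icc 1 m, poch t (Multiset.count i rho.parts)) ≠ 0 := by
    apply Finset.prod_ne_zero_iff.2
    intro i _
    exact poch_ne ht0 ht1 _
  field_simp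

include ht0 ht1 in
lemma fiber_sum {n m j : ℕ} (hm : n = m + j) (hj1 : 1 ≤ j) :
    ∑ lam ∈ univ.filter (fun lam : Nat.Partition n => Multiset.card lam.parts = j), W t n lam
      = t ^ (j ^ 2) * Gsum t m j := by
  unfold Gsum
  rw [Finset.mul_sum]
  refine Finset.sum_bij' (fun lam ha => stripPart hm lam (Finset.mem_filter.1 ha).2)
    (fun rho hb => unstripPart hm rho (Finset.mem_filter.1 hb).2) ?_ ?_ ?_ ?_ ?_
  · intro lam ha
    have hcard := (Finset.mem_filter.1 ha).2
    simp only [Finset.mem_filter, Finset.mem_univ, true_and]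
    show Multiset.card (strip lam.parts) ≤ j
    rw [strip_card _ (partition_parts_pos lam), hcard]
    omega
  · intro rho hb
    have hc := (Finset.mem_filter.1 hb).2
    simp only [Finset.mem_filter, Finset.mem_univ, true_and]
    show Multiset.card (unstrip rho.parts (j - Multiset.card rho.parts)) = j
    rw [unstrip_card]
    omega
  · intro lam ha
    have hcard := (Finset.mem_filter.1 ha).2
    apply Nat.Partition.ext
    show unstrip (strip lam.parts) (j - Multiset.card (strip lam.parts)) = lam.parts
    rw [strip_card _ (partition_parts_pos lam), hcard,
      show j - (j - Multiset.count 1 lam.parts) = Multiset.count 1 lam.parts from by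
        have := Multiset.count_le_card 1 lam.parts
        omega]
    exact unstrip_strip _ (partition_parts_pos lam)
  · intro rho hb
    apply Nat.Partition.ext
    show strip (unstrip rho.parts (j - Multiset.card rho.parts)) = rho.parts
    exact strip_unstrip _ _ (partition_parts_pos rho)
  · intro lam ha
    exact W_strip ht0 ht1 hm hj1 lam (Finset.mem_filter.1 ha).2 _ rfl

include ht0 ht1 in
lemma Gsum_rec {n : ℕ} (k : ℕ) (hn : 1 ≤ n) :
    Gsum t n k = ∑ j ∈ Icc 1 (min n k), t ^ (j ^ 2) * Gsum t (n - j) j / poch t (k - j) := by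
  unfold Gsum
  rw [← Finset.sum_fiberwise_of_maps_to (g := fun lam : Nat.Partition n => Multiset.card lam.parts)
    (t := Icc 1 (min n k)) ?hmaps]
  case hmaps =>
    intro lam hlam
    have h1 := partition_card_pos hn lam
    have h2 := partition_card_le lam
    have h3 := (Finset.mem_filter.1 hlam).2
    simp only [Finset.mem_Icc, le_min_iff]
    omega
  apply Finset.sum_congr rfl
  intro j hj
  simp only [Finset.mem_Icc, le_min_iff] at hj
  obtain ⟨hj1, hjn, hjk⟩ := hj
  have hfilter : (univ.filter (fun lam : Nat.Partition n => Multiset.card lam.parts ≤ k)).filter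
      (fun lam => Multiset.card lam.parts = j) =
      univ.filter (fun lam : Nat.Partition n => Multiset.card lam.parts = j) := by
    ext lam
    simp only [Finset.mem_filter, Finset.mem_univ, true_and]
    constructor
    · tauto
    · intro h; exact ⟨by omega, h⟩
  rw [hfilter]
  have : ∀ lam ∈ univ.filter (fun lam : Nat.Partition n => Multiset.card lam.parts = j),
      W t n lam / poch t (k - Multiset.card lam.parts) = W t n lam / poch t (k - j) := by
    intro lam hlam
    rw [(Finset.mem_filter.1 hlam).2]
  rw [Finset.sum_congr rfl this, ← Finset.sum_div,
    fiber_sum ht0 ht1 (show n = (n - j) + j from by omega) hj1]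
  rw [mul_div_assoc, Gsum]
  ring

noncomputable def Fsum (t : ℝ) (n : ℕ) : ℝ := ∑ lam : Nat.Partition n, W t n lam

include ht0 ht1 in
lemma Fsum_rec {n : ℕ} (hn : 1 ≤ n) :
    Fsum t n = ∑ j ∈ Icc 1 n, t ^ (j ^ 2) * Gsum t (n - j) j := by
  unfold Fsum
  rw [← Finset.sum_fiberwise_of_maps_to (g := fun lam : Nat.Partition n => Multiset.card lam.parts)
    (t := Icc 1 n) ?hmaps]
  case hmaps =>
    intro lam _
    have h1 := partition_card_pos hn lam
    have h2 := partition_card_le lam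
    simp only [Finset.mem_Icc]
    omega
  apply Finset.sum_congr rfl
  intro j hj
  simp only [Finset.mem_Icc] at hj
  have hfilter : (univ : Finset (Nat.Partition n)).filter
      (fun lam => Multiset.card lam.parts = j) =
      univ.filter (fun lam : Nat.Partition n => Multiset.card lam.parts = j) := rfl
  exact fiber_sum ht0 ht1 (show n = (n - j) + j from by omega) hj.1

include ht0 ht1 in
lemma Gclosed (n : ℕ) : ∀ k, Gsum t n k = t ^ n * gB t (n + k - 1) n / poch t k := by
  induction n using Nat.strong_induction_on with
  | _ n ih =>
    intro k
    rcases Nat.eq_zero_or_pos n with rfl | hn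
    · unfold Gsum
      have huniv : (univ : Finset (Nat.Partition 0)).filter
          (fun rho => Multiset.card rho.parts ≤ k) = univ := by
        apply Finset.filter_true_of_mem
        intro rho _
        simp [Nat.Partition.partition_zero_parts]
      rw [huniv]
      rw [Finset.univ_unique, Finset.sum_singleton]
      have hparts : (default : Nat.Partition 0).parts = 0 := Nat.Partition.partition_zero_parts _
      rw [pow_zero, one_mul, gB_zero_right ht0 ht1]
      unfold W
      simp [hparts]
    · rw [Gsum_rec ht0 ht1 k hn]
      have step : ∀ j ∈ Icc 1 (min n k),
          t ^ (j ^ 2) * Gsum t (n - j) j / poch t (k - j)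
            = t ^ (j ^ 2) * (t ^ (n - j) * gB t (n - 1) (n - j) / poch t j) / poch t (k - j) := by
        intro j hj
        simp only [Finset.mem_Icc, le_min_iff] at hj
        rw [ih (n - j) (by omega) j, show n - j + j - 1 = n - 1 from by omega]
      rw [Finset.sum_congr rfl step, vdmUse ht0 ht1 hn k]

end partitionLayer

section analytic
variable {t : ℝ} (ht0 : 0 < t) (ht1 : t < 1)

lemma neg_log_bound {x c : ℝ} (hx0 : 0 ≤ x) (hxc : x ≤ c) (hc : c < 1) :
    ‖Real.log (1 - x)‖ ≤ x / (1 - c) := by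
  have h1 : 0 < 1 - x := by linarith
  have h2 : 0 < 1 - c := by linarith
  have hlog0 : Real.log (1 - x) ≤ 0 := Real.log_nonpos (by linarith) (by linarith)
  rw [Real.norm_eq_abs, abs_of_nonpos hlog0, ← Real.log_inv]
  have h3 : Real.log (1 - x)⁻¹ ≤ (1 - x)⁻¹ - 1 :=
    Real.log_le_sub_one_of_pos (by positivity)
  have h4 : (1 - x)⁻¹ - 1 = x / (1 - x) := by field_simp; ring
  have h5 : x / (1 - x) ≤ x / (1 - c) := by
    apply div_le_div_of_nonneg_left hx0 h2
    linarith
  linarith [h4 ▸ h3]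

include ht0 ht1 in
lemma log_summable : Summable (fun j : ℕ => Real.log (1 - t ^ (j + 1))) := by
  apply Summable.of_norm_bounded (g := fun j : ℕ => (t / (1 - t)) * t ^ j)
    (((summable_geometric_of_lt_one ht0.le ht1)).mul_left _)
  intro j
  have hb : ‖Real.log (1 - t ^ (j + 1))‖ ≤ t ^ (j + 1) / (1 - t) := by
    apply neg_log_bound (by positivity) _ ht1
    calc t ^ (j + 1) ≤ t ^ 1 := pow_le_pow_of_le_one ht0.le ht1.le (by omega)
      _ = t := pow_one t
  calc ‖Real.log (1 - t ^ (j + 1))‖ ≤ t ^ (j + 1) / (1 - t) := hb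
    _ = t / (1 - t) * t ^ j := by rw [pow_succ']; ring

noncomputable def pochLim (t : ℝ) : ℝ := Real.exp (∑' j : ℕ, Real.log (1 - t ^ (j + 1)))

lemma pochLim_pos : 0 < pochLim t := Real.exp_pos _

include ht0 ht1 in
lemma poch_eq_exp (m : ℕ) :
    poch t m = Real.exp (∑ j ∈ Finset.range m, Real.log (1 - t ^ (j + 1))) := by
  rw [Real.exp_sum]
  unfold poch
  apply Finset.prod_congr rfl
  intro j _
  rw [Real.exp_log (one_sub_pow_pos ht0 ht1 (by omega))]

include ht0 ht1 in
lemma poch_tendsto : Tendsto (fun m => poch t m) atTop (𝓝 (pochLim t)) := by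
  have h1 : (fun m => poch t m) =
      fun m => Real.exp (∑ j ∈ Finset.range m, Real.log (1 - t ^ (j + 1))) := by
    funext m; exact poch_eq_exp ht0 ht1 m
  rw [h1]
  exact (Real.continuous_exp.tendsto _).comp (log_summable ht0 ht1).hasSum.tendsto_sum_nat

include ht0 ht1 in
lemma pochLim_le (m : ℕ) : pochLim t ≤ poch t m := by
  rw [poch_eq_exp ht0 ht1 m]
  apply Real.exp_le_exp.2
  have h := Summable.sum_add_tsum_nat_add (f := fun j : ℕ => Real.log (1 - t ^ (j + 1))) m
    (log_summable ht0 ht1)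
  have h2 : ∑' (i : ℕ), Real.log (1 - t ^ (i + m + 1)) ≤ 0 := by
    apply tsum_nonpos
    intro j
    apply Real.log_nonpos
    · have : t ^ (j + m + 1) < 1 := pow_lt_one₀ ht0.le ht1 (by omega)
      linarith
    · have : 0 < t ^ (j + m + 1) := by positivity
      linarith
  linarith [h, h2]

noncomputable def T (t v : ℝ) : ℝ := ∑' n : ℕ, v ^ n / poch t n

include ht0 ht1 in
lemma summable_T {v : ℝ} (hv0 : 0 ≤ v) (hv1 : v < 1) :
    Summable (fun n : ℕ => v ^ n / poch t n) := by
  apply Summable.of_nonneg_of_le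
    (fun n => div_nonneg (by positivity) (poch_pos ht0 ht1 n).le)
    (fun n => ?_)
    (((summable_geometric_of_lt_one hv0 hv1)).mul_right (pochLim t)⁻¹)
  rw [div_eq_mul_inv]
  apply mul_le_mul_of_nonneg_left _ (by positivity)
  exact inv_anti₀ (pochLim_pos) (pochLim_le ht0 ht1 n)

include ht0 ht1 in
lemma one_le_T {v : ℝ} (hv0 : 0 ≤ v) (hv1 : v < 1) : 1 ≤ T t v := by
  have h := Summable.le_tsum (summable_T ht0 ht1 hv0 hv1) 0
    (fun j _ => div_nonneg (by positivity) (poch_pos ht0 ht1 j).le)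
  simpa [poch_zero, T] using h

include ht0 ht1 in
lemma T_ne {v : ℝ} (hv0 : 0 ≤ v) (hv1 : v < 1) : T t v ≠ 0 := by
  have := one_le_T ht0 ht1 hv0 hv1
  linarith

include ht0 ht1 in
lemma T_tail {v : ℝ} (hv0 : 0 ≤ v) (hv1 : v < 1) :
    T t v = 1 + ∑' n : ℕ, v ^ (n + 1) / poch t (n + 1) := by
  unfold T
  rw [Summable.tsum_eq_zero_add (summable_T ht0 ht1 hv0 hv1)]
  simp [poch_zero]

include ht0 ht1 in
lemma funEq {v : ℝ} (hv0 : 0 ≤ v) (hv1 : v < 1) : (1 - v) * T t v = T t (v * t) := by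
  have hvt0 : 0 ≤ v * t := by positivity
  have hvt1 : v * t < 1 := by nlinarith
  have hs1 : Summable (fun n : ℕ => v ^ (n + 1) / poch t (n + 1)) :=
    (summable_nat_add_iff (f := fun n : ℕ => v ^ n / poch t n) 1).2 (summable_T ht0 ht1 hv0 hv1)
  have hs2 : Summable (fun n : ℕ => v ^ (n + 1) / poch t n) := by
    apply ((summable_T ht0 ht1 hv0 hv1).mul_left v).congr
    intro n
    rw [pow_succ']
    ring
  have expand : (1 - v) * T t v
      = 1 + ((∑' n : ℕ, v ^ (n + 1) / poch t (n + 1)) - ∑' n : ℕ, v ^ (n + 1) / poch t n) := by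
    have hvT : v * T t v = ∑' n : ℕ, v ^ (n + 1) / poch t n := by
      unfold T
      rw [← tsum_mul_left]
      apply tsum_congr
      intro n
      rw [pow_succ']
      ring
    rw [sub_mul, one_mul, hvT, T_tail ht0 ht1 hv0 hv1]
    ring
  rw [expand, T_tail ht0 ht1 hvt0 hvt1, ← Summable.tsum_sub hs1 hs2]
  congr 1
  apply tsum_congr
  intro n
  have h1 : poch t (n + 1) = poch t n * (1 - t ^ (n + 1)) := poch_succ n
  have hne : poch t n ≠ 0 := poch_ne ht0 ht1 n
  have h2 : (1 : ℝ) - t ^ (n + 1) ≠ 0 := (one_sub_pow_pos ht0 ht1 (by omega)).ne'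
  rw [mul_pow, h1]
  field_simp
  ring

include ht0 ht1 in
lemma iterEq {v : ℝ} (hv0 : 0 ≤ v) (hv1 : v < 1) (N : ℕ) :
    T t v * ∏ r ∈ Finset.range N, (1 - v * t ^ r) = T t (v * t ^ N) := by
  induction N with
  | zero => simp
  | succ N ih =>
    rw [Finset.prod_range_succ, ← mul_assoc, ih]
    have hw0 : 0 ≤ v * t ^ N := by positivity
    have hw1 : v * t ^ N < 1 := by
      have h1 : t ^ N ≤ 1 := pow_le_one₀ ht0.le ht1.le
      nlinarith
    have h2 := funEq ht0 ht1 hw0 hw1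
    rw [mul_comm (T t (v * t ^ N)) (1 - v * t ^ N), h2]
    congr 1
    rw [pow_succ]
    ring

include ht0 ht1 in
lemma decay {v : ℝ} (hv0 : 0 ≤ v) (hv1 : v < 1) :
    Tendsto (fun N : ℕ => T t (v * t ^ N)) atTop (𝓝 1) := by
  have key : ∀ N : ℕ, T t (v * t ^ N) - 1 ≤ (v / ((1 - v) * pochLim t)) * t ^ N ∧
      0 ≤ T t (v * t ^ N) - 1 := by
    intro N
    have hw0 : 0 ≤ v * t ^ N := by positivity
    have htN : t ^ N ≤ 1 := pow_le_one₀ ht0.le ht1.le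
    have hw1 : v * t ^ N < 1 := by nlinarith
    constructor
    · rw [T_tail ht0 ht1 hw0 hw1]
      have hsum1 : Summable (fun n : ℕ => (v * t ^ N) ^ (n + 1) / poch t (n + 1)) :=
        (summable_nat_add_iff (f := fun n : ℕ => (v * t ^ N) ^ n / poch t n) 1).2
          (summable_T ht0 ht1 hw0 hw1)
      have hsum2 : Summable (fun n : ℕ => (v * t ^ N) ^ (n + 1) * (pochLim t)⁻¹) := by
        apply Summable.mul_right
        exact (summable_nat_add_iff (f := fun n : ℕ => (v * t ^ N) ^ n) 1).2
          (summable_geometric_of_lt_one hw0 hw1)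
      have hle := Summable.tsum_le_tsum (f := fun n : ℕ => (v * t ^ N) ^ (n + 1) / poch t (n + 1))
        (g := fun n : ℕ => (v * t ^ N) ^ (n + 1) * (pochLim t)⁻¹)
        (fun n => by
          show (v * t ^ N) ^ (n + 1) / poch t (n + 1) ≤ (v * t ^ N) ^ (n + 1) * (pochLim t)⁻¹
          rw [div_eq_mul_inv]
          exact mul_le_mul_of_nonneg_left
            (inv_anti₀ pochLim_pos (pochLim_le ht0 ht1 (n + 1))) (by positivity))
        hsum1 hsum2
      have heval : ∑' n : ℕ, (v * t ^ N) ^ (n + 1) * (pochLim t)⁻¹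
          = (v * t ^ N) * ((1 - v * t ^ N)⁻¹ * (pochLim t)⁻¹) := by
        rw [tsum_mul_right]
        have hg : ∀ n : ℕ, (v * t ^ N) ^ (n + 1) = (v * t ^ N) * (v * t ^ N) ^ n := by
          intro n; rw [pow_succ']
        rw [tsum_congr hg, tsum_mul_left, tsum_geometric_of_lt_one hw0 hw1]
        ring
      rw [heval] at hle
      have hfinal : (v * t ^ N) * ((1 - v * t ^ N)⁻¹ * (pochLim t)⁻¹)
          ≤ v / ((1 - v) * pochLim t) * t ^ N := by
        have h1 : (1 : ℝ) - v ≤ 1 - v * t ^ N := by nlinarith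
        have h2 : 0 < 1 - v := by linarith
        have h3 : 0 < 1 - v * t ^ N := by linarith
        have hE : 0 < pochLim t := pochLim_pos (t := t)
        have h4 : (1 - v * t ^ N)⁻¹ ≤ (1 - v)⁻¹ := inv_anti₀ h2 h1
        rw [div_eq_mul_inv, mul_inv]
        calc (v * t ^ N) * ((1 - v * t ^ N)⁻¹ * (pochLim t)⁻¹)
            ≤ (v * t ^ N) * ((1 - v)⁻¹ * (pochLim t)⁻¹) := by
              apply mul_le_mul_of_nonneg_left _ (by positivity)
              exact mul_le_mul_of_nonneg_right h4 (by positivity)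
          _ = v * ((1 - v)⁻¹ * (pochLim t)⁻¹) * t ^ N := by ring
      linarith
    · have := one_le_T ht0 ht1 hw0 hw1
      linarith
  have hgeo : Tendsto (fun N : ℕ => (v / ((1 - v) * pochLim t)) * t ^ N) atTop (𝓝 0) := by
    have := tendsto_pow_atTop_nhds_zero_of_lt_one ht0.le ht1
    simpa using this.const_mul (v / ((1 - v) * pochLim t))
  have hsq : Tendsto (fun N : ℕ => T t (v * t ^ N) - 1) atTop (𝓝 0) := by
    apply squeeze_zero (fun N => (key N).2) (fun N => (key N).1) hgeo
  have := hsq.add_const 1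
  simpa using this

include ht0 ht1 in
lemma prodLim {v : ℝ} (hv0 : 0 ≤ v) (hv1 : v < 1) :
    Tendsto (fun N : ℕ => ∏ r ∈ Finset.range N, (1 - v * t ^ r)) atTop (𝓝 (T t v)⁻¹) := by
  have hT := T_ne ht0 ht1 hv0 hv1
  have heq : (fun N : ℕ => ∏ r ∈ Finset.range N, (1 - v * t ^ r))
      = fun N : ℕ => T t (v * t ^ N) / T t v := by
    funext N
    rw [eq_div_iff hT, mul_comm, iterEq ht0 ht1 hv0 hv1 N]
  rw [heq]
  have := (decay ht0 ht1 hv0 hv1).div (tendsto_const_nhds (x := T t v)) hT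
  simpa [Pi.div_def] using this

include ht0 ht1 in
lemma summable_log_inv {v : ℝ} (hv0 : 0 ≤ v) (hv1 : v < 1) :
    Summable (fun r : ℕ => Real.log ((1 - v * t ^ r)⁻¹)) := by
  apply Summable.of_norm_bounded (g := fun r : ℕ => (v / (1 - v)) * t ^ r)
    ((summable_geometric_of_lt_one ht0.le ht1).mul_left _)
  intro r
  have htr : t ^ r ≤ 1 := pow_le_one₀ ht0.le ht1.le
  have hb : ‖Real.log (1 - v * t ^ r)‖ ≤ (v * t ^ r) / (1 - v) :=
    neg_log_bound (by positivity) (by nlinarith) hv1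
  rw [Real.log_inv, norm_neg]
  calc ‖Real.log (1 - v * t ^ r)‖ ≤ (v * t ^ r) / (1 - v) := hb
    _ = v / (1 - v) * t ^ r := by ring

include ht0 ht1 in
lemma hasProd_inv {v : ℝ} (hv0 : 0 ≤ v) (hv1 : v < 1) :
    HasProd (fun r : ℕ => (1 - v * t ^ r)⁻¹) (T t v) := by
  have hpos : ∀ r : ℕ, 0 < 1 - v * t ^ r := by
    intro r
    have htr : t ^ r ≤ 1 := pow_le_one₀ ht0.le ht1.le
    nlinarith
  have hsum := (summable_log_inv ht0 ht1 hv0 hv1).hasSum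
  set S := ∑' r : ℕ, Real.log ((1 - v * t ^ r)⁻¹) with hS
  have hprod : HasProd (fun r : ℕ => (1 - v * t ^ r)⁻¹) (Real.exp S) := by
    have h1 : HasProd (fun r : ℕ => Real.exp (Real.log ((1 - v * t ^ r)⁻¹))) (Real.exp S) := by
      unfold HasProd
      have h2 : (fun s : Finset ℕ => ∏ i ∈ s, Real.exp (Real.log ((1 - v * t ^ i)⁻¹)))
          = fun s : Finset ℕ => Real.exp (∑ i ∈ s, Real.log ((1 - v * t ^ i)⁻¹)) := by
        funext s
        rw [Real.exp_sum]
      rw [h2]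
      exact (Real.continuous_exp.tendsto _).comp hsum
    have h5 : (fun r : ℕ => Real.exp (Real.log ((1 - v * t ^ r)⁻¹)))
        = fun r : ℕ => (1 - v * t ^ r)⁻¹ := by
      funext r
      rw [Real.exp_log (by have := hpos r; positivity)]
    rwa [h5] at h1
  have hES : Real.exp S = T t v := by
    have lim1 : Tendsto (fun N : ℕ => ∏ r ∈ Finset.range N, (1 - v * t ^ r)⁻¹) atTop
        (𝓝 (Real.exp S)) := hprod.tendsto_prod_nat
    have lim2 : Tendsto (fun N : ℕ => ∏ r ∈ Finset.range N, (1 - v * t ^ r)⁻¹) atTop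
        (𝓝 (T t v)) := by
      have h3 : (fun N : ℕ => ∏ r ∈ Finset.range N, (1 - v * t ^ r)⁻¹)
          = fun N : ℕ => (∏ r ∈ Finset.range N, (1 - v * t ^ r))⁻¹ := by
        funext N
        rw [← Finset.prod_inv_distrib]
      rw [h3]
      have h4 := (prodLim ht0 ht1 hv0 hv1).inv₀ (by
        have := T_ne ht0 ht1 hv0 hv1
        positivity)
      simpa [inv_inv] using h4
    exact tendsto_nhds_unique lim1 lim2
  rwa [hES] at hprod

end analytic

section fc
variable {t : ℝ} (ht0 : 0 < t) (ht1 : t < 1)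

include ht0 ht1 in
lemma Fclosed (n : ℕ) : Fsum t n = t ^ n / poch t n := by
  rcases Nat.eq_zero_or_pos n with rfl | hn
  · unfold Fsum W
    rw [Finset.univ_unique, Finset.sum_singleton]
    simp [poch_zero]
  · rw [Fsum_rec ht0 ht1 hn]
    have hGc : ∀ j ∈ Icc 1 n, t ^ (j ^ 2) * Gsum t (n - j) j
        = t ^ (j ^ 2) * (t ^ (n - j) * gB t (n - 1) (n - j) / poch t j) := by
      intro j hj
      simp only [Finset.mem_Icc] at hj
      rw [Gclosed ht0 ht1 (n - j) j, show n - j + j - 1 = n - 1 from by omega]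
    rw [Finset.sum_congr rfl hGc]
    set E := pochLim t with hEdef
    have hE : 0 < E := pochLim_pos
    have hpn : poch t n ≠ 0 := poch_ne ht0 ht1 n
    set c : ℕ → ℝ := fun j => t ^ (j ^ 2) * (t ^ (n - j) * gB t (n - 1) (n - j) / poch t j)
      with hc
    have lim1 : Tendsto (fun k : ℕ => ∑ j ∈ Icc 1 n, c j / poch t (k - j)) atTop
        (𝓝 (∑ j ∈ Icc 1 n, c j / E)) := by
      apply tendsto_finset_sum
      intro j _
      exact Tendsto.div tendsto_const_nhds
        ((poch_tendsto ht0 ht1).comp (tendsto_sub_atTop_nat j)) hE.ne'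
    have lim2 : Tendsto (fun k : ℕ => t ^ n * gB t (n + k - 1) n / poch t k) atTop
        (𝓝 (t ^ n * (E / (poch t n * E)) / E)) := by
      have hg' : ∀ k : ℕ, 1 ≤ k → t ^ n * gB t (n + k - 1) n / poch t k
          = t ^ n * (poch t (k + (n - 1)) / (poch t n * poch t (k - 1))) / poch t k := by
        intro k hk
        rw [gB_eq (n + k - 1) n (by omega), show n + k - 1 - n = k - 1 from by omega,
          show n + k - 1 = k + (n - 1) from by omega]
      have hg'' : Tendsto (fun k : ℕ => t ^ n * (poch t (k + (n - 1)) / (poch t n * poch t (k - 1))) / poch t k)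
          atTop (𝓝 (t ^ n * (E / (poch t n * E)) / E)) := by
        apply Tendsto.div _ (poch_tendsto ht0 ht1) hE.ne'
        apply Tendsto.const_mul
        apply Tendsto.div
        · exact (poch_tendsto ht0 ht1).comp (tendsto_add_atTop_nat (n - 1))
        · exact Tendsto.const_mul _ ((poch_tendsto ht0 ht1).comp (tendsto_sub_atTop_nat 1))
        · positivity
      apply hg''.congr'
      filter_upwards [eventually_ge_atTop 1] with k hk
      exact (hg' k hk).symm
    have hfg : (fun k : ℕ => ∑ j ∈ Icc 1 n, c j / poch t (k - j))
        =ᶠ[atTop] fun k : ℕ => t ^ n * gB t (n + k - 1) n / poch t k := by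
      filter_upwards [eventually_ge_atTop n] with k hk
      have := vdmUse ht0 ht1 hn k
      rw [min_eq_left hk] at this
      rw [← this]
    have huniq := tendsto_nhds_unique (lim1.congr' hfg) lim2
    have hsum : (∑ j ∈ Icc 1 n, c j) / E = ∑ j ∈ Icc 1 n, c j / E := Finset.sum_div _ _ _
    rw [← hsum] at huniq
    have : ∑ j ∈ Icc 1 n, c j = t ^ n / poch t n := by
      have h2 : t ^ n * (E / (poch t n * E)) / E = t ^ n / poch t n / E := by
        field_simp
      rw [h2] at huniq
      field_simp at huniq
      rw [eq_div_iff hpn]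
      apply mul_right_cancel₀ hE.ne'
      linear_combination E * huniq
    exact this

end fc

/-- For `q > 1` and `0 < u < 1`,
`∑_λ u^{|λ|} / (q^{∑ᵢ (λ'ᵢ)²} ∏ᵢ (1/q)_{mᵢ(λ)}) = ∏_{r=1}^∞ 1/(1 − u/q^r)`,
the sum being over all partitions of all nonnegative integers. -/
theorem sum_partition_measure_eq_prod (q u : ℝ) (hq : 1 < q) (hu0 : 0 < u) (hu1 : u < 1) :
    ∑' p : Σ n : ℕ, Nat.Partition n,
        u ^ p.1 /
          (q ^ (∑ i ∈ Finset.Icc 1 p.1, (conjPart p.2 i) ^ 2) *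
            ∏ i ∈ Finset.Icc 1 p.1, qPoch q 1 (Multiset.count i p.2.parts)) =
      ∏' r : ℕ, (1 - u / q ^ (r + 1))⁻¹ := by
  have hq0 : 0 < q := lt_trans one_pos hq
  set t := q⁻¹ with htdef
  have ht0 : 0 < t := inv_pos.2 hq0
  have ht1 : t < 1 := by
    rw [htdef]
    exact inv_lt_one_of_one_lt₀ hq
  have hv0 : 0 ≤ u * t := by positivity
  have hv1 : u * t < 1 := by nlinarith
  -- termwise rewrite of the summand
  have hterm : ∀ p : (Σ n : ℕ, Nat.Partition n),
      u ^ p.1 / (q ^ (∑ i ∈ Finset.Icc 1 p.1, (conjPart p.2 i) ^ 2) *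
          ∏ i ∈ Finset.Icc 1 p.1, qPoch q 1 (Multiset.count i p.2.parts))
        = u ^ p.1 * W t p.1 p.2 := by
    intro p
    have hqP : (∏ i ∈ Finset.Icc 1 p.1, qPoch q 1 (Multiset.count i p.2.parts))
        = ∏ i ∈ Finset.Icc 1 p.1, poch t (Multiset.count i p.2.parts) := by
      apply Finset.prod_congr rfl
      intro i _
      unfold qPoch poch
      exact Finset.prod_congr rfl (fun j _ => by rw [one_mul])
    rw [hqP]
    unfold W
    have hP : 0 < ∏ i ∈ Finset.Icc 1 p.1, poch t (Multiset.count i p.2.parts) :=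
      Finset.prod_pos (fun i _ => poch_pos ht0 ht1 _)
    have hts : t ^ (∑ i ∈ Finset.Icc 1 p.1, (conjPart p.2 i) ^ 2)
        = (q ^ (∑ i ∈ Finset.Icc 1 p.1, (conjPart p.2 i) ^ 2))⁻¹ := by
      rw [htdef, inv_pow]
    rw [hts, div_eq_mul_inv, mul_inv, div_eq_mul_inv]
  rw [tsum_congr hterm]
  -- summability and fiberwise evaluation
  have hWnn : ∀ (n : ℕ) (lam : Nat.Partition n), 0 ≤ W t n lam := by
    intro n lam
    apply div_nonneg (by positivity)
    exact (Finset.prod_pos (fun i _ => poch_pos ht0 ht1 _)).le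
  have hfib : ∀ n : ℕ, (∑ lam : Nat.Partition n, u ^ n * W t n lam) = (u * t) ^ n / poch t n := by
    intro n
    rw [← Finset.mul_sum, show (∑ lam : Nat.Partition n, W t n lam) = Fsum t n from rfl,
      Fclosed ht0 ht1 n, mul_pow, mul_div_assoc]
  have hsummable : Summable (fun p : (Σ n : ℕ, Nat.Partition n) => u ^ p.1 * W t p.1 p.2) := by
    rw [summable_sigma_of_nonneg (fun p => mul_nonneg (by positivity) (hWnn p.1 p.2))]
    constructor
    · intro n
      exact (hasSum_fintype _).summable
    · apply Summable.congr (summable_T ht0 ht1 hv0 hv1)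
      intro n
      rw [← hfib n, tsum_fintype]
  rw [Summable.tsum_sigma hsummable]
  have hmid : ∑' n : ℕ, (∑' lam : Nat.Partition n, u ^ n * W t n lam) = T t (u * t) := by
    apply tsum_congr
    intro n
    rw [tsum_fintype, hfib n]
  rw [hmid]
  -- the infinite product
  have hRHS : (fun r : ℕ => (1 - u / q ^ (r + 1))⁻¹) = fun r : ℕ => (1 - (u * t) * t ^ r)⁻¹ := by
    funext r
    congr 1
    rw [div_eq_mul_inv, ← inv_pow]
    rw [show (q⁻¹ : ℝ) ^ (r + 1) = q⁻¹ * q⁻¹ ^ r from pow_succ' q⁻¹ r]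
    rw [htdef]; ring
  rw [hRHS]
  exact ((hasProd_inv ht0 ht1 hv0 hv1).tprod_eq).symm
end

section
/- Let q > 1 and 0 < u < 1 be real numbers and let a be a nonnegative integer. For a partition λ, let λ'_i denote the i-th part of the conjugate partition, m_i(λ) the number of parts of λ equal to i, (1/q)_m = ∏_{j=1}^m (1 − q^{−j}), and (u/q)_m = ∏_{j=1}^m (1 − u·q^{−j}). Then the sum over all partitions λ with exactly a parts of u^{|λ|}/(q^{∑_i (λ'_i)²} · ∏_{i≥1} (1/q)_{m_i(λ)}) equals u^a / (q^{a²} · (1/q)_a · (u/q)_a). -/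
set_option maxHeartbeats 1000000

namespace QAux

variable {q u : ℝ}

lemma t_pos (hq : 1 < q) : 0 < q⁻¹ := inv_pos.2 (lt_trans one_pos hq)
lemma t_lt_one (hq : 1 < q) : q⁻¹ < 1 := inv_lt_one_of_one_lt₀ hq

lemma qPoch_zero (q x : ℝ) : qPoch q x 0 = 1 := rfl

lemma qPoch_succ (q x : ℝ) (m : ℕ) :
    qPoch q x (m + 1) = qPoch q x m * (1 - x * q⁻¹ ^ (m + 1)) :=
  Finset.prod_range_succ _ _

lemma factor_pos (hq : 1 < q) {x : ℝ} (hx0 : 0 ≤ x) (hx1 : x ≤ 1) (j : ℕ) :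
    0 < 1 - x * q⁻¹ ^ (j + 1) := by
  have h1 : q⁻¹ ^ (j + 1) < 1 :=
    pow_lt_one₀ (le_of_lt (t_pos hq)) (t_lt_one hq) (Nat.succ_ne_zero j)
  have h2 : x * q⁻¹ ^ (j + 1) ≤ q⁻¹ ^ (j + 1) :=
    mul_le_of_le_one_left (pow_nonneg (le_of_lt (t_pos hq)) _) hx1
  linarith

lemma factor_le_one (hq : 1 < q) {x : ℝ} (hx0 : 0 ≤ x) (j : ℕ) :
    1 - x * q⁻¹ ^ (j + 1) ≤ 1 := by
  have : 0 ≤ x * q⁻¹ ^ (j + 1) := by positivity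
  linarith

lemma qPoch_pos (hq : 1 < q) {x : ℝ} (hx0 : 0 ≤ x) (hx1 : x ≤ 1) (m : ℕ) :
    0 < qPoch q x m :=
  Finset.prod_pos fun j _ => factor_pos hq hx0 hx1 j

lemma qPoch_le_one (hq : 1 < q) {x : ℝ} (hx0 : 0 ≤ x) (hx1 : x ≤ 1) (m : ℕ) :
    qPoch q x m ≤ 1 :=
  Finset.prod_le_one (fun j _ => le_of_lt (factor_pos hq hx0 hx1 j))
    (fun j _ => factor_le_one hq hx0 j)

lemma qPoch_anti (hq : 1 < q) {x : ℝ} (hx0 : 0 ≤ x) (hx1 : x ≤ 1) {m m' : ℕ} (h : m ≤ m') :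
    qPoch q x m' ≤ qPoch q x m := by
  induction m' with
  | zero => simpa using (Nat.le_zero.1 h) ▸ le_refl _
  | succ k ih =>
    rcases Nat.lt_or_ge m (k+1) with hm | hm
    · have := ih (Nat.lt_succ_iff.1 hm)
      rw [qPoch_succ]
      calc qPoch q x k * (1 - x * q⁻¹ ^ (k + 1)) ≤ qPoch q x k * 1 := by
            exact mul_le_mul_of_nonneg_left (factor_le_one hq hx0 k)
              (le_of_lt (qPoch_pos hq hx0 hx1 k))
        _ = qPoch q x k := mul_one _
        _ ≤ qPoch q x m := this
    · have : m = k + 1 := le_antisymm h hm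
      rw [this]

/-- Gaussian binomial-type coefficient defined by the q-Pascal rule. -/
noncomputable def G (t : ℝ) : ℕ → ℕ → ℝ
  | _, 0 => 1
  | 0, _ + 1 => 0
  | a + 1, b + 1 => G t a (b + 1) + t ^ (a - b) * G t a b

lemma G_zero_right (t : ℝ) (a : ℕ) : G t a 0 = 1 := by cases a <;> rfl

lemma G_eq_zero (t : ℝ) : ∀ {a b : ℕ}, a < b → G t a b = 0 := by
  intro a
  induction a with
  | zero => intro b hb; match b, hb with
            | b + 1, _ => rfl
  | succ k ih =>
    intro b hb
    match b, hb with
    | b + 1, hb =>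
      show G t k (b + 1) + t ^ (k - b) * G t k b = 0
      rw [ih (by omega), ih (by omega), mul_zero, add_zero]

/-- The key polynomial identity: `∑_b G(a,b) u^b t^{b²} ∏_{j=b+1}^a (1 - u t^j) = 1`. -/
lemma G_identity (t : ℝ) : ∀ (a : ℕ) (u : ℝ),
    ∑ b ∈ Finset.range (a + 1),
      G t a b * u ^ b * t ^ (b ^ 2) * ∏ j ∈ Finset.Icc (b + 1) a, (1 - u * t ^ j) = 1 := by
  intro a
  induction a with
  | zero => intro u; simp [G_zero_right]
  | succ a ih =>
    intro u
    rw [Finset.sum_range_succ'] -- splits off b = 0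
    have h0 : G t (a+1) 0 * u ^ 0 * t ^ (0 ^ 2) *
        ∏ j ∈ Finset.Icc (0 + 1) (a + 1), (1 - u * t ^ j)
        = ∏ j ∈ Finset.Icc 1 (a + 1), (1 - u * t ^ j) := by
      simp [G_zero_right]
    rw [h0]
    -- rewrite the b+1 terms using Pascal
    have hsplit : ∀ b ∈ Finset.range (a + 1),
        G t (a+1) (b+1) * u ^ (b+1) * t ^ ((b+1) ^ 2) *
          ∏ j ∈ Finset.Icc (b + 2) (a + 1), (1 - u * t ^ j)
        = (G t a (b+1) * u ^ (b+1) * t ^ ((b+1) ^ 2) *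
            ∏ j ∈ Finset.Icc (b + 2) (a + 1), (1 - u * t ^ j))
          + (t ^ (a - b) * G t a b * u ^ (b+1) * t ^ ((b+1) ^ 2) *
            ∏ j ∈ Finset.Icc (b + 2) (a + 1), (1 - u * t ^ j)) := by
      intro b _
      show (G t a (b + 1) + t ^ (a - b) * G t a b) * _ * _ * _ = _
      ring
    rw [Finset.sum_congr rfl hsplit, Finset.sum_add_distrib]
    -- Claim B : the second sum equals u * t^(a+1)
    have hB : ∀ b ∈ Finset.range (a + 1),
        t ^ (a - b) * G t a b * u ^ (b+1) * t ^ ((b+1) ^ 2) *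
          ∏ j ∈ Finset.Icc (b + 2) (a + 1), (1 - u * t ^ j)
        = u * t ^ (a+1) * (G t a b * (u*t) ^ b * t ^ (b ^ 2) *
            ∏ j ∈ Finset.Icc (b + 1) a, (1 - (u*t) * t ^ j)) := by
      intro b hb
      have hb' : b ≤ a := Nat.lt_succ_iff.1 (Finset.mem_range.1 hb)
      have hprod : ∏ j ∈ Finset.Icc (b+1) a, (1 - (u*t) * t ^ j)
          = ∏ j ∈ Finset.Icc (b+2) (a+1), (1 - u * t ^ j) := by
        rw [← Finset.Ico_add_one_right_eq_Icc, ← Finset.Ico_add_one_right_eq_Icc,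
          ← Finset.prod_Ico_add' (fun j => 1 - u * t ^ j) (b+1) (a+1) 1]
        refine Finset.prod_congr rfl fun j _ => ?_
        rw [pow_succ]
        ring
      rw [hprod]
      have hexp : t ^ (a - b) * t ^ ((b+1) ^ 2) = t ^ (a+1) * t ^ b * t ^ (b ^ 2) := by
        rw [← pow_add, ← pow_add, ← pow_add]
        congr 1
        have := hb'
        cases Nat.le.dest hb' with
        | intro k hk => subst hk; ring_nf; omega
      calc t ^ (a - b) * G t a b * u ^ (b+1) * t ^ ((b+1) ^ 2) *
            ∏ j ∈ Finset.Icc (b + 2) (a + 1), (1 - u * t ^ j)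
          = (t ^ (a - b) * t ^ ((b+1) ^ 2)) * (G t a b * u ^ (b+1) *
            ∏ j ∈ Finset.Icc (b + 2) (a + 1), (1 - u * t ^ j)) := by ring
        _ = (t ^ (a+1) * t ^ b * t ^ (b ^ 2)) * (G t a b * u ^ (b+1) *
            ∏ j ∈ Finset.Icc (b + 2) (a + 1), (1 - u * t ^ j)) := by rw [hexp]
        _ = u * t ^ (a+1) * (G t a b * (u*t) ^ b * t ^ (b ^ 2) *
            ∏ j ∈ Finset.Icc (b + 2) (a + 1), (1 - u * t ^ j)) := by
            rw [mul_pow, pow_succ]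
            ring
    rw [Finset.sum_congr rfl hB, ← Finset.mul_sum, ih (u*t)]
    -- Claim A : the first sum plus the b = 0 term equals 1 - u * t^(a+1)
    have hg : ∀ b ∈ Finset.range (a + 1),
        G t a b * u ^ b * t ^ (b ^ 2) * ∏ j ∈ Finset.Icc (b + 1) (a + 1), (1 - u * t ^ j)
        = (G t a b * u ^ b * t ^ (b ^ 2) * ∏ j ∈ Finset.Icc (b + 1) a, (1 - u * t ^ j))
            * (1 - u * t ^ (a+1)) := by
      intro b hb
      have hb' : b ≤ a := Nat.lt_succ_iff.1 (Finset.mem_range.1 hb)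
      rw [← Finset.Ico_add_one_right_eq_Icc (b+1) (a+1), Finset.prod_Ico_succ_top (by omega),
        Finset.Ico_add_one_right_eq_Icc]
      ring
    have hfirst : (∑ b ∈ Finset.range (a + 1),
        G t a (b+1) * u ^ (b+1) * t ^ ((b+1) ^ 2) *
          ∏ j ∈ Finset.Icc (b + 2) (a + 1), (1 - u * t ^ j))
        + ∏ j ∈ Finset.Icc 1 (a + 1), (1 - u * t ^ j)
        = 1 - u * t ^ (a+1) := by
      have h2 : (∑ b ∈ Finset.range (a + 1),
          G t a (b+1) * u ^ (b+1) * t ^ ((b+1) ^ 2) *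
            ∏ j ∈ Finset.Icc ((b+1) + 1) (a + 1), (1 - u * t ^ j))
          + G t a 0 * u ^ 0 * t ^ (0 ^ 2) *
            ∏ j ∈ Finset.Icc (0 + 1) (a + 1), (1 - u * t ^ j)
          = ∑ b ∈ Finset.range (a + 2),
            G t a b * u ^ b * t ^ (b ^ 2) * ∏ j ∈ Finset.Icc (b + 1) (a + 1), (1 - u * t ^ j) :=
        (Finset.sum_range_succ' (fun b => G t a b * u ^ b * t ^ (b ^ 2) * ∏ j ∈ Finset.Icc (b + 1) (a + 1), (1 - u * t ^ j)) (a+1)).symm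
      have h3 : ∑ b ∈ Finset.range (a + 2),
            G t a b * u ^ b * t ^ (b ^ 2) * ∏ j ∈ Finset.Icc (b + 1) (a + 1), (1 - u * t ^ j)
          = ∑ b ∈ Finset.range (a + 1),
            G t a b * u ^ b * t ^ (b ^ 2) * ∏ j ∈ Finset.Icc (b + 1) (a + 1), (1 - u * t ^ j) := by
        rw [Finset.sum_range_succ, G_eq_zero t (Nat.lt_succ_self a)]
        simp
      have h4 : ∑ b ∈ Finset.range (a + 1),
            G t a b * u ^ b * t ^ (b ^ 2) * ∏ j ∈ Finset.Icc (b + 1) (a + 1), (1 - u * t ^ j)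
          = (∑ b ∈ Finset.range (a + 1),
            G t a b * u ^ b * t ^ (b ^ 2) * ∏ j ∈ Finset.Icc (b + 1) a, (1 - u * t ^ j))
              * (1 - u * t ^ (a+1)) := by
        rw [Finset.sum_congr rfl hg, ← Finset.sum_mul]
      have h0 : G t a 0 * u ^ 0 * t ^ (0 ^ 2) *
            ∏ j ∈ Finset.Icc (0 + 1) (a + 1), (1 - u * t ^ j)
          = ∏ j ∈ Finset.Icc 1 (a + 1), (1 - u * t ^ j) := by
        simp [G_zero_right]
      rw [← h0, h2, h3, h4, ih u, one_mul]
    linarith [hfirst]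

/-- `P t m = ∏_{j=1}^m (1 - t^j)`. -/
noncomputable def Pt (t : ℝ) (m : ℕ) : ℝ := ∏ j ∈ Finset.range m, (1 - t ^ (j + 1))

lemma Pt_succ (t : ℝ) (m : ℕ) : Pt t (m + 1) = Pt t m * (1 - t ^ (m + 1)) :=
  Finset.prod_range_succ _ _

lemma Pt_zero (t : ℝ) : Pt t 0 = 1 := rfl

lemma qPoch_one_eq_Pt (q : ℝ) (m : ℕ) : qPoch q 1 m = Pt q⁻¹ m := by
  unfold qPoch Pt
  exact Finset.prod_congr rfl fun j _ => by rw [one_mul]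

lemma G_mul (t : ℝ) : ∀ a b : ℕ, b ≤ a → G t a b * (Pt t b * Pt t (a - b)) = Pt t a := by
  intro a
  induction a with
  | zero =>
    intro b hb
    interval_cases b
    simp [G_zero_right, Pt_zero]
  | succ a ih =>
    intro b hb
    match b with
    | 0 => simp [G_zero_right, Pt_zero]
    | b + 1 =>
      have hba : b ≤ a := by omega
      have hpas : G t (a+1) (b+1) = G t a (b+1) + t ^ (a - b) * G t a b := rfl
      rcases eq_or_lt_of_le hba with rfl | hlt
      · -- b = a
        rw [hpas, G_eq_zero t (Nat.lt_succ_self b), zero_add, Nat.sub_self, pow_zero, one_mul]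
        have h2 := ih b le_rfl
        rw [Nat.sub_self, Pt_zero, mul_one] at h2
        have : b + 1 - (b + 1) = 0 := Nat.sub_self _
        rw [this, Pt_zero, mul_one, Pt_succ, ← mul_assoc, h2]
      · -- b + 1 ≤ a
        obtain ⟨k, rfl⟩ : ∃ k, a = b + 1 + k := ⟨a - (b+1), by omega⟩
        have e1 : b + 1 + k - b = k + 1 := by omega
        have e2 : b + 1 + k - (b + 1) = k := by omega
        have e3 : b + 1 + k + 1 - (b + 1) = k + 1 := by omega
        have h1 := ih (b+1) (by omega)
        have h2 := ih b (by omega)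
        rw [e2] at h1
        rw [e1] at h2
        rw [hpas, e1, e3]
        have hPk : Pt t (k+1) = Pt t k * (1 - t ^ (k+1)) := Pt_succ t k
        have hPb : Pt t (b+1) = Pt t b * (1 - t ^ (b+1)) := Pt_succ t b
        have hPa : Pt t (b+1+k+1) = Pt t (b+1+k) * (1 - t ^ (b+1+k+1)) := Pt_succ t _
        have hexp : t ^ (k+1) * t ^ (b+1) = t ^ (b+1+k+1) := by
          rw [← pow_add]; congr 1; omega
        calc (G t (b+1+k) (b+1) + t ^ (k+1) * G t (b+1+k) b) * (Pt t (b+1) * Pt t (k+1))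
            = (G t (b+1+k) (b+1) * (Pt t (b+1) * Pt t k)) * (1 - t ^ (k+1))
              + t ^ (k+1) * (G t (b+1+k) b * (Pt t b * Pt t (k+1))) * (1 - t ^ (b+1)) := by
              rw [hPk, hPb]; ring
          _ = Pt t (b+1+k) * (1 - t ^ (k+1))
              + t ^ (k+1) * Pt t (b+1+k) * (1 - t ^ (b+1)) := by rw [h1, h2]
          _ = Pt t (b+1+k) * (1 - t ^ (k+1) * t ^ (b+1)) := by ring
          _ = Pt t (b+1+k+1) := by rw [hexp, hPa]

lemma qPoch_split (q u : ℝ) {b a : ℕ} (hba : b ≤ a) :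
    qPoch q u a = qPoch q u b * ∏ j ∈ Finset.Icc (b + 1) a, (1 - u * q⁻¹ ^ j) := by
  unfold qPoch
  have h1 : ∀ m : ℕ, ∏ j ∈ Finset.range m, (1 - u * q⁻¹ ^ (j + 1))
      = ∏ j ∈ Finset.Ico 1 (m + 1), (1 - u * q⁻¹ ^ j) := by
    intro m
    rw [← Finset.prod_Ico_add' (fun j => 1 - u * q⁻¹ ^ j) 0 m 1, Finset.range_eq_Ico]
  rw [h1 a, h1 b, ← Finset.Ico_add_one_right_eq_Icc (b+1) a,
    ← Finset.prod_Ico_consecutive (fun j => 1 - u * q⁻¹ ^ j) (by omega : 1 ≤ b + 1)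
      (by omega : b + 1 ≤ a + 1)]

lemma key_sum (q u : ℝ) (hq : 1 < q) (hu0 : 0 < u) (hu1 : u < 1) (a : ℕ) :
    ∑ b ∈ Finset.range (a + 1),
        u ^ b * q⁻¹ ^ (b ^ 2) / (qPoch q 1 b * qPoch q u b * qPoch q 1 (a - b))
      = 1 / (qPoch q 1 a * qPoch q u a) := by
  have hP : ∀ m, 0 < qPoch q 1 m := qPoch_pos hq zero_le_one le_rfl
  have hU : ∀ m, 0 < qPoch q u m := qPoch_pos hq (le_of_lt hu0) (le_of_lt hu1)
  have h1 : ∀ b ∈ Finset.range (a + 1),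
      u ^ b * q⁻¹ ^ (b ^ 2) / (qPoch q 1 b * qPoch q u b * qPoch q 1 (a - b))
      = (G q⁻¹ a b * u ^ b * q⁻¹ ^ (b ^ 2) * ∏ j ∈ Finset.Icc (b + 1) a, (1 - u * q⁻¹ ^ j))
          * (1 / (qPoch q 1 a * qPoch q u a)) := by
    intro b hb
    have hba : b ≤ a := Nat.lt_succ_iff.1 (Finset.mem_range.1 hb)
    have hG : G q⁻¹ a b * (qPoch q 1 b * qPoch q 1 (a - b)) = qPoch q 1 a := by
      rw [qPoch_one_eq_Pt, qPoch_one_eq_Pt, qPoch_one_eq_Pt]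
      exact G_mul q⁻¹ a b hba
    have hUs : qPoch q u a = qPoch q u b * ∏ j ∈ Finset.Icc (b + 1) a, (1 - u * q⁻¹ ^ j) :=
      qPoch_split q u hba
    rw [mul_one_div, div_eq_div_iff (mul_pos (mul_pos (hP b) (hU b)) (hP (a - b))).ne' (mul_pos (hP a) (hU a)).ne', ← hG]
    nth_rewrite 1 [hUs]
    ring
  rw [Finset.sum_congr rfl h1, ← Finset.sum_mul, G_identity, one_mul]

end QAux


namespace QAux

open Multiset

/-- Any part is at most `n`. -/
lemma part_le_n {n : ℕ} (lam : Nat.Partition n) {i : ℕ} (hi : i ∈ lam.parts) : i ≤ n :=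
  lam.parts_sum ▸ Multiset.le_sum_of_mem hi

lemma conjPart_eq_zero {n : ℕ} (lam : Nat.Partition n) {i : ℕ} (hi : n < i) :
    conjPart lam i = 0 := by
  unfold conjPart
  rw [Multiset.filter_eq_nil.2 fun j hj => by
    have := part_le_n lam hj
    omega]
  rfl

lemma count_parts_eq_zero {n : ℕ} (lam : Nat.Partition n) {i : ℕ} (hi : n < i) :
    Multiset.count i lam.parts = 0 :=
  Multiset.count_eq_zero.2 fun hmem => absurd (part_le_n lam hmem) (by omega)

lemma card_le_sum (s : Multiset ℕ) (h : ∀ i ∈ s, 0 < i) : Multiset.card s ≤ s.sum := by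
  induction s using Multiset.induction_on with
  | empty => simp
  | cons a s ih =>
    rw [Multiset.card_cons, Multiset.sum_cons]
    have ha : 0 < a := h a (Multiset.mem_cons_self a s)
    have := ih fun i hi => h i (Multiset.mem_cons_of_mem hi)
    omega

lemma sum_map_pred (s : Multiset ℕ) (h : ∀ i ∈ s, 0 < i) :
    (s.map (· - 1)).sum + Multiset.card s = s.sum := by
  induction s using Multiset.induction_on with
  | empty => simp
  | cons a s ih =>
    rw [Multiset.map_cons, Multiset.sum_cons, Multiset.sum_cons, Multiset.card_cons]
    have ha : 0 < a := h a (Multiset.mem_cons_self a s)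
    have := ih fun i hi => h i (Multiset.mem_cons_of_mem hi)
    omega

lemma sum_map_succ (s : Multiset ℕ) : (s.map (· + 1)).sum = s.sum + Multiset.card s := by
  have := Multiset.sum_map_add (m := s) (f := id) (g := fun _ => 1)
  simpa using this

lemma sigma_partition_ext {n₁ n₂ : ℕ} {p₁ : Nat.Partition n₁} {p₂ : Nat.Partition n₂}
    (h : p₁.parts = p₂.parts) : (⟨n₁, p₁⟩ : Σ n, Nat.Partition n) = ⟨n₂, p₂⟩ := by
  have hn : n₁ = n₂ := by rw [← p₁.parts_sum, ← p₂.parts_sum, h]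
  subst hn
  exact congrArg _ (Nat.Partition.ext h)

/-- Adding a column: partition of `n` with at most `a` parts becomes a partition of `n + a`
with exactly `a` parts. -/
def colEquiv (a : ℕ) :
    {p : Σ n : ℕ, Nat.Partition n // p.2.parts.card ≤ a}
      ≃ {p : Σ n : ℕ, Nat.Partition n // p.2.parts.card = a} where
  toFun x :=
    ⟨⟨x.1.1 + a,
      { parts := x.1.2.parts.map (· + 1) + Multiset.replicate (a - Multiset.card x.1.2.parts) 1
        parts_pos := by
          intro i hi
          rcases Multiset.mem_add.1 hi with hi | hi
          · rcases Multiset.mem_map.1 hi with ⟨j, _, rfl⟩; omega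
          · rw [Multiset.eq_of_mem_replicate hi]; omega
        parts_sum := by
          rw [Multiset.sum_add, sum_map_succ, Multiset.sum_replicate, smul_eq_mul, mul_one,
            x.1.2.parts_sum]
          have := x.2
          omega }⟩, by
      simp only [Multiset.card_add, Multiset.card_map, Multiset.card_replicate]
      have := x.2
      omega⟩
  invFun y :=
    ⟨⟨y.1.1 - a,
      { parts := (y.1.2.parts.map (· - 1)).filter (· ≠ 0)
        parts_pos := by
          intro i hi
          have h := (Multiset.mem_filter.1 hi).2
          omega
        parts_sum := by
          have h1 : ((y.1.2.parts.map (· - 1)).filter (· ≠ 0)).sum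
              = (y.1.2.parts.map (· - 1)).sum := by
            conv_rhs => rw [← Multiset.filter_add_not (· ≠ 0) (y.1.2.parts.map (· - 1))]
            rw [Multiset.sum_add]
            have hz : (Multiset.filter (fun x => ¬ x ≠ 0) (y.1.2.parts.map (· - 1))).sum = 0 :=
              Multiset.sum_eq_zero fun x hx => by
                have := (Multiset.mem_filter.1 hx).2
                omega
            rw [hz, add_zero]
          have h2 := sum_map_pred y.1.2.parts fun i hi => y.1.2.parts_pos hi
          rw [y.1.2.parts_sum, y.2] at h2
          rw [h1]
          omega }⟩, by
      calc Multiset.card ((y.1.2.parts.map (· - 1)).filter (· ≠ 0))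
          ≤ Multiset.card (y.1.2.parts.map (· - 1)) := Multiset.card_le_card
            (Multiset.filter_le _ _)
        _ = a := by rw [Multiset.card_map, y.2]⟩
  left_inv := by
    rintro ⟨⟨n, mu⟩, hx⟩
    apply Subtype.ext
    apply sigma_partition_ext
    show ((mu.parts.map (· + 1) + Multiset.replicate _ 1).map (· - 1)).filter (· ≠ 0)
        = mu.parts
    rw [Multiset.map_add, Multiset.map_map, Multiset.map_replicate, Multiset.filter_add]
    have h1 : mu.parts.map ((· - 1) ∘ (· + 1)) = mu.parts := by
      rw [show ((· - 1) ∘ (· + 1) : ℕ → ℕ) = id by funext i; simp, Multiset.map_id]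
    rw [h1]
    have h2 : Multiset.filter (· ≠ 0) mu.parts = mu.parts :=
      Multiset.filter_eq_self.2 fun i hi => (mu.parts_pos hi).ne'
    have h3 : Multiset.filter (· ≠ 0) (Multiset.replicate (a - Multiset.card mu.parts) (1 - 1 : ℕ))
        = 0 :=
      Multiset.filter_eq_nil.2 fun x hx => by
        have := Multiset.eq_of_mem_replicate hx
        omega
    rw [h2, h3, add_zero]
  right_inv := by
    rintro ⟨⟨m, lam⟩, hy⟩
    apply Subtype.ext
    apply sigma_partition_ext
    show (((lam.parts.map (· - 1)).filter (· ≠ 0)).map (· + 1)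
        + Multiset.replicate (a - Multiset.card ((lam.parts.map (· - 1)).filter (· ≠ 0))) 1)
        = lam.parts
    have hfil : (lam.parts.map (· - 1)).filter (· ≠ 0)
        = (lam.parts.filter (· ≠ 1)).map (· - 1) := by
      rw [Multiset.filter_map]
      congr 1
      refine Multiset.filter_congr fun i hi => ?_
      have := lam.parts_pos hi
      simp only [Function.comp_apply, ne_eq]
      omega
    have hmap : ((lam.parts.filter (· ≠ 1)).map (· - 1)).map (· + 1)
        = lam.parts.filter (· ≠ 1) := by
      rw [Multiset.map_map]
      rw [show Multiset.map ((· + 1) ∘ (· - 1)) (lam.parts.filter (· ≠ 1))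
        = Multiset.map id (lam.parts.filter (· ≠ 1)) from Multiset.map_congr rfl fun i hi => by
          have h1 := lam.parts_pos (Multiset.mem_of_mem_filter hi)
          simp only [Function.comp_apply, id_eq]
          omega, Multiset.map_id]
    have hcard : Multiset.card ((lam.parts.filter (· ≠ 1)).map (· - 1))
        = Multiset.card (lam.parts.filter (· ≠ 1)) := Multiset.card_map _ _
    have hsplit := Multiset.filter_add_not (· ≠ 1) lam.parts
    have hcards : Multiset.card (lam.parts.filter (· ≠ 1))
        + Multiset.card (lam.parts.filter (fun i => ¬ i ≠ 1)) = a := by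
      rw [← Multiset.card_add, hsplit, hy]
    have hrep : lam.parts.filter (fun i => ¬ i ≠ 1) = Multiset.replicate
        (Multiset.card (lam.parts.filter (fun i => ¬ i ≠ 1))) 1 :=
      Multiset.eq_replicate_card.2 fun i hi => by simpa using Multiset.of_mem_filter hi
    rw [hfil, hmap, hcard]
    rw [show a - Multiset.card (lam.parts.filter (· ≠ 1))
      = Multiset.card (lam.parts.filter (fun i => ¬ i ≠ 1)) by omega]
    rw [← hrep, hsplit]

end QAux

namespace QAux

open Multiset

@[to_additive]
lemma prod_Icc_shift {M : Type*} [CommMonoid M] (g : ℕ → M) (n a : ℕ) (ha : 1 ≤ a)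
    (hvan : ∀ i, n < i → g (i + 1) = 1) :
    ∏ i ∈ Finset.Icc 1 (n + a), g i = g 1 * ∏ i ∈ Finset.Icc 1 n, g (i + 1) := by
  rw [← Finset.Ico_add_one_right_eq_Icc 1 (n + a), Finset.prod_eq_prod_Ico_succ_bot (by omega) g]
  congr 1
  have h0 : ∏ i ∈ Finset.Ico 1 (n + a), g (i + 1) = ∏ i ∈ Finset.Ico (1 + 1) (n + a + 1), g i :=
    Finset.prod_Ico_add' g 1 (n + a) 1
  show ∏ k ∈ Finset.Ico (1 + 1) (n + a + 1), g k = _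
  rw [← h0, ← Finset.Ico_add_one_right_eq_Icc 1 n]
  symm
  apply Finset.prod_subset
  · exact Finset.Ico_subset_Ico le_rfl (by omega)
  · intro i hi hni
    have h1 : 1 ≤ i ∧ i < n + a := by simpa using hi
    have h2 : ¬(1 ≤ i ∧ i < n + 1) := by simpa using hni
    exact hvan i (by omega)

variable {a : ℕ}

lemma colEquiv_parts (x : {p : Σ n : ℕ, Nat.Partition n // p.2.parts.card ≤ a}) :
    ((colEquiv a x).1.2).parts
      = x.1.2.parts.map (· + 1) + Multiset.replicate (a - Multiset.card x.1.2.parts) 1 := rfl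

lemma colEquiv_fst (x : {p : Σ n : ℕ, Nat.Partition n // p.2.parts.card ≤ a}) :
    (colEquiv a x).1.1 = x.1.1 + a := rfl

lemma conjPart_colEquiv_one (x : {p : Σ n : ℕ, Nat.Partition n // p.2.parts.card ≤ a}) :
    conjPart (colEquiv a x).1.2 1 = a := by
  unfold conjPart
  rw [(Multiset.filter_eq_self (p := fun j => 1 ≤ j)).2
    fun i hi => (colEquiv a x).1.2.parts_pos hi]
  exact (colEquiv a x).2

lemma conjPart_colEquiv_succ (x : {p : Σ n : ℕ, Nat.Partition n // p.2.parts.card ≤ a})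
    {i : ℕ} (hi : 1 ≤ i) :
    conjPart (colEquiv a x).1.2 (i + 1) = conjPart x.1.2 i := by
  unfold conjPart
  rw [colEquiv_parts, Multiset.filter_add, Multiset.filter_map]
  have h1 : Multiset.filter ((fun j => i + 1 ≤ j) ∘ (· + 1)) x.1.2.parts
      = Multiset.filter (fun j => i ≤ j) x.1.2.parts :=
    Multiset.filter_congr fun j _ => by simp only [Function.comp_apply]; omega
  have h2 : Multiset.filter (fun j => i + 1 ≤ j)
      (Multiset.replicate (a - Multiset.card x.1.2.parts) 1) = 0 :=
    Multiset.filter_eq_nil.2 fun j hj => by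
      rw [Multiset.eq_of_mem_replicate hj]; omega
  rw [h1, h2, add_zero, Multiset.card_map]

lemma count_colEquiv_one (x : {p : Σ n : ℕ, Nat.Partition n // p.2.parts.card ≤ a}) :
    Multiset.count 1 ((colEquiv a x).1.2).parts = a - Multiset.card x.1.2.parts := by
  rw [colEquiv_parts, Multiset.count_add, Multiset.count_replicate, if_pos rfl,
    Multiset.count_eq_zero.2 (fun hmem => by
      rcases Multiset.mem_map.1 hmem with ⟨j, hj, hj1⟩
      have := x.1.2.parts_pos hj
      omega), zero_add]

lemma count_colEquiv_succ (x : {p : Σ n : ℕ, Nat.Partition n // p.2.parts.card ≤ a})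
    {i : ℕ} (hi : 1 ≤ i) :
    Multiset.count (i + 1) ((colEquiv a x).1.2).parts = Multiset.count i x.1.2.parts := by
  rw [colEquiv_parts, Multiset.count_add, Multiset.count_replicate,
    if_neg (by omega), add_zero]
  exact Multiset.count_map_eq_count' (· + 1) _ (add_left_injective 1) i

end QAux

namespace QAux

open Multiset

/-- The summand. -/
noncomputable def pf (q u : ℝ) (p : Σ n : ℕ, Nat.Partition n) : ℝ :=
  u ^ p.1 /
    (q ^ (∑ i ∈ Finset.Icc 1 p.1, (conjPart p.2 i) ^ 2) *
      ∏ i ∈ Finset.Icc 1 p.1, qPoch q 1 (Multiset.count i p.2.parts))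

variable {q u : ℝ}

lemma conj_sum_colEquiv {a : ℕ} (ha : 1 ≤ a)
    (x : {p : Σ n : ℕ, Nat.Partition n // p.2.parts.card ≤ a}) :
    ∑ i ∈ Finset.Icc 1 ((colEquiv a x).1.1), (conjPart (colEquiv a x).1.2 i) ^ 2
      = a ^ 2 + ∑ i ∈ Finset.Icc 1 x.1.1, (conjPart x.1.2 i) ^ 2 := by
  have hrfl : ∑ i ∈ Finset.Icc 1 ((colEquiv a x).1.1), (conjPart (colEquiv a x).1.2 i) ^ 2
      = ∑ i ∈ Finset.Icc 1 (x.1.1 + a), (conjPart (colEquiv a x).1.2 i) ^ 2 := rfl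
  rw [hrfl]
  rw [sum_Icc_shift (fun i => (conjPart (colEquiv a x).1.2 i) ^ 2) x.1.1 a ha
    (fun i hi => by
      show conjPart (colEquiv a x).1.2 (i + 1) ^ 2 = 0
      rw [conjPart_colEquiv_succ x (by omega), conjPart_eq_zero x.1.2 hi]
      rfl)]
  rw [conjPart_colEquiv_one]
  congr 1
  exact Finset.sum_congr rfl fun i hi => by
    rw [conjPart_colEquiv_succ x (Finset.mem_Icc.1 hi).1]

lemma prod_qPoch_colEquiv {a : ℕ} (ha : 1 ≤ a) (hq : 1 < q)
    (x : {p : Σ n : ℕ, Nat.Partition n // p.2.parts.card ≤ a}) :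
    ∏ i ∈ Finset.Icc 1 ((colEquiv a x).1.1),
        qPoch q 1 (Multiset.count i ((colEquiv a x).1.2).parts)
      = qPoch q 1 (a - Multiset.card x.1.2.parts) *
        ∏ i ∈ Finset.Icc 1 x.1.1, qPoch q 1 (Multiset.count i x.1.2.parts) := by
  have hrfl : ∏ i ∈ Finset.Icc 1 ((colEquiv a x).1.1),
        qPoch q 1 (Multiset.count i ((colEquiv a x).1.2).parts)
      = ∏ i ∈ Finset.Icc 1 (x.1.1 + a),
        qPoch q 1 (Multiset.count i ((colEquiv a x).1.2).parts) := rfl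
  rw [hrfl]
  rw [prod_Icc_shift (fun i => qPoch q 1 (Multiset.count i ((colEquiv a x).1.2).parts)) x.1.1 a ha
    (fun i hi => by
      show qPoch q 1 (Multiset.count (i + 1) ((colEquiv a x).1.2).parts) = 1
      rw [count_colEquiv_succ x (by omega), count_parts_eq_zero x.1.2 hi, qPoch_zero])]
  rw [count_colEquiv_one]
  congr 1
  exact Finset.prod_congr rfl fun i hi => by
    rw [count_colEquiv_succ x (Finset.mem_Icc.1 hi).1]

lemma pf_pos (hq : 1 < q) (hu0 : 0 < u) (p : Σ n : ℕ, Nat.Partition n) : 0 < pf q u p := by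
  unfold pf
  have h1 : (0:ℝ) < q := lt_trans one_pos hq
  exact div_pos (pow_pos hu0 _) (mul_pos (pow_pos h1 _)
    (Finset.prod_pos fun i _ => qPoch_pos hq zero_le_one le_rfl _))

/-- The key transformation of the summand under adding a column. -/
lemma pf_colEquiv {a : ℕ} (ha : 1 ≤ a) (hq : 1 < q) (hu0 : 0 < u)
    (x : {p : Σ n : ℕ, Nat.Partition n // p.2.parts.card ≤ a}) :
    pf q u (colEquiv a x).1
      = (u ^ a * q⁻¹ ^ (a ^ 2) / qPoch q 1 (a - Multiset.card x.1.2.parts)) * pf q u x.1 := by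
  have hqpos : (0:ℝ) < q := lt_trans one_pos hq
  unfold pf
  rw [conj_sum_colEquiv ha x, prod_qPoch_colEquiv ha hq x]
  have hrfl : (u : ℝ) ^ ((colEquiv a x).1.1) = u ^ (x.1.1 + a) := rfl
  rw [hrfl, pow_add, pow_add]
  have hP : 0 < qPoch q 1 (a - Multiset.card x.1.2.parts) := qPoch_pos hq zero_le_one le_rfl _
  have hProd : 0 < ∏ i ∈ Finset.Icc 1 x.1.1, qPoch q 1 (Multiset.count i x.1.2.parts) :=
    Finset.prod_pos fun i _ => qPoch_pos hq zero_le_one le_rfl _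
  have hq1 : 0 < q ^ (∑ i ∈ Finset.Icc 1 x.1.1, (conjPart x.1.2 i) ^ 2) := pow_pos hqpos _
  have hq2 : 0 < q ^ (a ^ 2) := pow_pos hqpos _
  rw [inv_pow]
  field_simp

end QAux

namespace QAux

open Multiset

def fiberEquiv (Q : (Σ n : ℕ, Nat.Partition n) → Prop) :
    {p : Σ n : ℕ, Nat.Partition n // Q p} ≃ Σ n : ℕ, {lam : Nat.Partition n // Q ⟨n, lam⟩} where
  toFun x := ⟨x.1.1, x.1.2, x.2⟩
  invFun y := ⟨⟨y.1, y.2.1⟩, y.2.2⟩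
  left_inv _ := rfl
  right_inv _ := rfl

def splitEquiv (a : ℕ) :
    {p : Σ n : ℕ, Nat.Partition n // p.2.parts.card ≤ a}
      ≃ Σ b : Fin (a + 1), {p : Σ n : ℕ, Nat.Partition n // p.2.parts.card = (b : ℕ)} where
  toFun x := ⟨⟨Multiset.card x.1.2.parts, Nat.lt_succ_of_le x.2⟩, ⟨x.1, rfl⟩⟩
  invFun y := ⟨y.2.1, by rw [y.2.2]; exact Nat.lt_succ_iff.1 y.1.2⟩
  left_inv x := rfl
  right_inv := by
    rintro ⟨⟨b, hb⟩, p, hp⟩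
    simp only [Fin.val_mk] at hp
    subst hp
    rfl

lemma sum_count_eq_card {n : ℕ} (lam : Nat.Partition n) :
    ∑ i ∈ Finset.Icc 1 n, Multiset.count i lam.parts = Multiset.card lam.parts := by
  rw [← Multiset.toFinset_sum_count_eq lam.parts]
  symm
  apply Finset.sum_subset
  · intro i hi
    have hmem := Multiset.mem_toFinset.1 hi
    exact Finset.mem_Icc.2 ⟨lam.parts_pos hmem, part_le_n lam hmem⟩
  · intro i _ hni
    exact Multiset.count_eq_zero.2 fun h => hni (Multiset.mem_toFinset.2 h)

lemma pf_le (hq : 1 < q) (hu0 : 0 < u) {b : ℕ} (p : Σ n : ℕ, Nat.Partition n)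
    (hb : Multiset.card p.2.parts = b) :
    pf q u p ≤ u ^ p.1 / qPoch q 1 b ^ b := by
  have hc0 : 0 < qPoch q 1 b := qPoch_pos hq zero_le_one le_rfl b
  have hc1 : qPoch q 1 b ≤ 1 := qPoch_le_one hq zero_le_one le_rfl b
  unfold pf
  have hq1 : (1:ℝ) ≤ q ^ (∑ i ∈ Finset.Icc 1 p.1, (conjPart p.2 i) ^ 2) :=
    one_le_pow₀ (le_of_lt hq)
  -- the product of qPoch factors is at least (qPoch q 1 b) ^ b
  set A := (Finset.Icc 1 p.1).filter (fun i => Multiset.count i p.2.parts ≠ 0) with hA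
  have hprod : qPoch q 1 b ^ b
      ≤ ∏ i ∈ Finset.Icc 1 p.1, qPoch q 1 (Multiset.count i p.2.parts) := by
    rw [← Finset.prod_filter_mul_prod_filter_not (Finset.Icc 1 p.1)
      (fun i => Multiset.count i p.2.parts ≠ 0) (fun i => qPoch q 1 (Multiset.count i p.2.parts))]
    have h2 : ∏ i ∈ (Finset.Icc 1 p.1).filter
        (fun i => ¬ Multiset.count i p.2.parts ≠ 0), qPoch q 1 (Multiset.count i p.2.parts)
        = 1 := by
      apply Finset.prod_eq_one
      intro i hi
      rw [not_ne_iff.1 (Finset.mem_filter.1 hi).2, qPoch_zero]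
    rw [h2, mul_one]
    have hcardA : A.card ≤ b := by
      have h3 : A.card ≤ ∑ i ∈ A, Multiset.count i p.2.parts := by
        rw [Finset.card_eq_sum_ones]
        exact Finset.sum_le_sum fun i hi =>
          Nat.one_le_iff_ne_zero.2 (Finset.mem_filter.1 hi).2
      have h4 : ∑ i ∈ A, Multiset.count i p.2.parts
          ≤ ∑ i ∈ Finset.Icc 1 p.1, Multiset.count i p.2.parts :=
        Finset.sum_le_sum_of_subset (Finset.filter_subset _ _)
      rw [sum_count_eq_card, hb] at h4
      omega
    calc qPoch q 1 b ^ b ≤ qPoch q 1 b ^ A.card :=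
          pow_le_pow_of_le_one (le_of_lt hc0) hc1 hcardA
      _ = ∏ _i ∈ A, qPoch q 1 b := (Finset.prod_const _).symm
      _ ≤ ∏ i ∈ A, qPoch q 1 (Multiset.count i p.2.parts) := by
          apply Finset.prod_le_prod (fun i _ => le_of_lt hc0)
          intro i _
          apply qPoch_anti hq zero_le_one le_rfl
          rw [← hb]
          exact Multiset.count_le_card _ _
  have hden : qPoch q 1 b ^ b
      ≤ q ^ (∑ i ∈ Finset.Icc 1 p.1, (conjPart p.2 i) ^ 2) *
        ∏ i ∈ Finset.Icc 1 p.1, qPoch q 1 (Multiset.count i p.2.parts) := by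
    calc qPoch q 1 b ^ b ≤ ∏ i ∈ Finset.Icc 1 p.1, qPoch q 1 (Multiset.count i p.2.parts) := hprod
      _ = 1 * _ := (one_mul _).symm
      _ ≤ _ := by
          apply mul_le_mul_of_nonneg_right hq1
          exact le_of_lt (Finset.prod_pos fun i _ => qPoch_pos hq zero_le_one le_rfl _)
  exact div_le_div_of_nonneg_left (le_of_lt (pow_pos hu0 _)) (pow_pos hc0 b) hden

end QAux

namespace QAux

open Multiset

variable {q u : ℝ}

lemma card_partition_fiber_le (n b : ℕ) :
    Fintype.card {lam : Nat.Partition n // Multiset.card lam.parts = b} ≤ (n + 1) ^ b := by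
  have h := Fintype.card_le_of_injective
    (fun lam : {lam : Nat.Partition n // Multiset.card lam.parts = b} =>
      (fun k : Fin b =>
        (⟨(Multiset.sort lam.1.parts (· ≤ ·)).getD k 0, by
          rcases Nat.lt_or_ge (k : ℕ) ((Multiset.sort lam.1.parts (· ≤ ·)).length) with hk | hk
          · rw [List.getD_eq_getElem _ _ hk]
            have hmem := List.getElem_mem hk
            rw [← Multiset.mem_coe, Multiset.sort_eq] at hmem
            exact Nat.lt_succ_of_le (part_le_n lam.1 hmem)
          · rw [List.getD_eq_default _ _ hk]
            exact Nat.succ_pos n⟩ : Fin (n + 1))))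
    ?_
  · simpa [Fintype.card_fun] using h
  · intro l1 l2 hl
    have hlen1 : (Multiset.sort l1.1.parts (· ≤ ·)).length = b := by
      rw [Multiset.length_sort, l1.2]
    have hlen2 : (Multiset.sort l2.1.parts (· ≤ ·)).length = b := by
      rw [Multiset.length_sort, l2.2]
    have hlists : Multiset.sort l1.1.parts (· ≤ ·) = Multiset.sort l2.1.parts (· ≤ ·) := by
      apply List.ext_getElem (by rw [hlen1, hlen2])
      intro k hk1 hk2
      have hkb : k < b := by omega
      have h1 := congrFun hl ⟨k, hkb⟩
      have h2 : ((Multiset.sort l1.1.parts (· ≤ ·)).getD k 0)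
          = ((Multiset.sort l2.1.parts (· ≤ ·)).getD k 0) := congrArg Fin.val h1
      rwa [List.getD_eq_getElem _ _ hk1, List.getD_eq_getElem _ _ hk2] at h2
    apply Subtype.ext
    apply Nat.Partition.ext
    rw [← Multiset.sort_eq l1.1.parts (· ≤ ·), ← Multiset.sort_eq l2.1.parts (· ≤ ·)]
    exact congrArg _ hlists

lemma summable_majorant (hq : 1 < q) (hu0 : 0 < u) (hu1 : u < 1) (b : ℕ) (c : ℝ) :
    Summable (fun n : ℕ => ((n + 1 : ℕ) : ℝ) ^ b * u ^ n * c) := by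
  apply Summable.mul_right
  have h1 : Summable (fun n : ℕ => ((n : ℝ) ^ b * u ^ n)) := by
    apply summable_pow_mul_geometric_of_norm_lt_one
    rw [Real.norm_eq_abs, abs_of_pos hu0]
    exact hu1
  have h2 := h1.comp_injective (fun m k h => Nat.succ_injective h : Function.Injective Nat.succ)
  have h3 := h2.mul_right u⁻¹
  apply h3.congr
  intro n
  show ((n + 1 : ℕ) : ℝ) ^ b * u ^ (n + 1) * u⁻¹ = ((n + 1 : ℕ) : ℝ) ^ b * u ^ n
  have huu : u ^ (n + 1) * u⁻¹ = u ^ n := by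
    rw [pow_succ, mul_assoc, mul_inv_cancel₀ (ne_of_gt hu0), mul_one]
  rw [mul_assoc, huu]

lemma summable_fiber (hq : 1 < q) (hu0 : 0 < u) (hu1 : u < 1) (b : ℕ) :
    Summable (fun p : {p : Σ n : ℕ, Nat.Partition n // p.2.parts.card = b} => pf q u p.1) := by
  rw [← Equiv.summable_iff (fiberEquiv (fun p => p.2.parts.card = b)).symm]
  have hc0 : 0 < qPoch q 1 b := qPoch_pos hq zero_le_one le_rfl b
  apply (summable_sigma_of_nonneg (fun x => le_of_lt (pf_pos hq hu0 _))).2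
  refine ⟨fun n => Summable.of_finite, ?_⟩
  refine Summable.of_nonneg_of_le
    (fun n => tsum_nonneg fun x => le_of_lt (pf_pos hq hu0 _)) (fun n => ?_)
    (summable_majorant hq hu0 hu1 b ((qPoch q 1 b ^ b)⁻¹))
  rw [tsum_fintype]
  calc (∑ lam : {lam : Nat.Partition n // Multiset.card lam.parts = b},
            ((fun p : {p : Σ n : ℕ, Nat.Partition n // p.2.parts.card = b} => pf q u p.1)
              ∘ ⇑(fiberEquiv (fun p => p.2.parts.card = b)).symm) ⟨n, lam⟩)
          ≤ Fintype.card {lam : Nat.Partition n // Multiset.card lam.parts = b}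
            • (u ^ n / qPoch q 1 b ^ b) := by
            apply Finset.sum_le_card_nsmul
            intro lam _
            exact pf_le hq hu0 (⟨n, lam.1⟩ : Σ n, Nat.Partition n) lam.2
        _ ≤ ((n + 1 : ℕ) : ℝ) ^ b * u ^ n * (qPoch q 1 b ^ b)⁻¹ := by
            rw [nsmul_eq_mul]
            have hcard := card_partition_fiber_le n b
            have hnn : (0:ℝ) ≤ u ^ n / qPoch q 1 b ^ b :=
              div_nonneg (le_of_lt (pow_pos hu0 n)) (le_of_lt (pow_pos hc0 b))
            calc (Fintype.card {lam : Nat.Partition n // Multiset.card lam.parts = b} : ℝ)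
                  * (u ^ n / qPoch q 1 b ^ b)
                ≤ (((n + 1) ^ b : ℕ) : ℝ) * (u ^ n / qPoch q 1 b ^ b) := by
                  apply mul_le_mul_of_nonneg_right _ hnn
                  exact_mod_cast hcard
              _ = ((n + 1 : ℕ) : ℝ) ^ b * u ^ n * (qPoch q 1 b ^ b)⁻¹ := by
                  push_cast
                  rw [div_eq_mul_inv]
                  ring

end QAux

namespace QAux

open Multiset

variable {q u : ℝ}

noncomputable def F (q u : ℝ) (b : ℕ) : ℝ :=
  ∑' p : {p : Σ n : ℕ, Nat.Partition n // p.2.parts.card = b}, pf q u p.1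

lemma F_zero : F q u 0 = 1 := by
  have hx0 : ∀ x : {p : Σ n : ℕ, Nat.Partition n // p.2.parts.card = 0},
      x = ⟨⟨0, ⟨0, by simp, rfl⟩⟩, rfl⟩ := by
    rintro ⟨⟨n, lam⟩, hx⟩
    apply Subtype.ext
    apply sigma_partition_ext
    exact Multiset.card_eq_zero.1 hx
  unfold F
  rw [tsum_eq_single (⟨⟨0, ⟨0, by simp, rfl⟩⟩, rfl⟩ :
      {p : Σ n : ℕ, Nat.Partition n // p.2.parts.card = 0})
    (fun b hb => absurd (hx0 b) hb)]
  unfold pf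
  norm_num

lemma F_rec (hq : 1 < q) (hu0 : 0 < u) (hu1 : u < 1) {a : ℕ} (ha : 1 ≤ a) :
    F q u a = ∑ b ∈ Finset.range (a + 1),
      (u ^ a * q⁻¹ ^ (a ^ 2) / qPoch q 1 (a - b)) * F q u b := by
  have h1 : F q u a = ∑' x : {p : Σ n : ℕ, Nat.Partition n // p.2.parts.card ≤ a},
      pf q u (colEquiv a x).1 :=
    ((colEquiv a).tsum_eq (fun p => pf q u p.1)).symm
  rw [h1, tsum_congr (fun x => pf_colEquiv ha hq hu0 x),
    ← Equiv.tsum_eq (splitEquiv a).symm]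
  have h2 : ∀ y : Σ b : Fin (a + 1), {p : Σ n : ℕ, Nat.Partition n // p.2.parts.card = (b : ℕ)},
      (u ^ a * q⁻¹ ^ (a ^ 2) /
          qPoch q 1 (a - Multiset.card ((splitEquiv a).symm y).1.2.parts)) *
        pf q u ((splitEquiv a).symm y).1
      = (u ^ a * q⁻¹ ^ (a ^ 2) / qPoch q 1 (a - (y.1 : ℕ))) * pf q u y.2.1 := by
    rintro ⟨b, p, hp⟩
    show (u ^ a * q⁻¹ ^ (a ^ 2) / qPoch q 1 (a - Multiset.card p.2.parts)) * pf q u p = _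
    rw [hp]
  rw [tsum_congr h2]
  have hsummable : Summable (fun y :
      Σ b : Fin (a + 1), {p : Σ n : ℕ, Nat.Partition n // p.2.parts.card = (b : ℕ)} =>
      (u ^ a * q⁻¹ ^ (a ^ 2) / qPoch q 1 (a - (y.1 : ℕ))) * pf q u y.2.1) := by
    apply (summable_sigma_of_nonneg ?_).2 ⟨?_, Summable.of_finite⟩
    · rintro ⟨b, p⟩
      have hC : 0 ≤ u ^ a * q⁻¹ ^ (a ^ 2) / qPoch q 1 (a - (b : ℕ)) := by
        apply div_nonneg _ (le_of_lt (qPoch_pos hq zero_le_one le_rfl _))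
        have h0q : (0:ℝ) < q⁻¹ := t_pos hq
        positivity
      exact mul_nonneg hC (le_of_lt (pf_pos hq hu0 _))
    · intro b
      exact ((summable_fiber hq hu0 hu1 (b : ℕ)).mul_left
        (u ^ a * q⁻¹ ^ (a ^ 2) / qPoch q 1 (a - (b : ℕ)))).congr (fun y => rfl)
  rw [hsummable.tsum_sigma]
  have h3 : ∀ b : Fin (a + 1),
      (∑' x : {p : Σ n : ℕ, Nat.Partition n // p.2.parts.card = (b : ℕ)},
        (u ^ a * q⁻¹ ^ (a ^ 2) / qPoch q 1 (a - (b : ℕ))) * pf q u x.1)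
      = (u ^ a * q⁻¹ ^ (a ^ 2) / qPoch q 1 (a - (b : ℕ))) * F q u (b : ℕ) := by
    intro b
    exact tsum_mul_left
  rw [tsum_congr h3, tsum_fintype]
  exact Fin.sum_univ_eq_sum_range
    (fun b => (u ^ a * q⁻¹ ^ (a ^ 2) / qPoch q 1 (a - b)) * F q u b) (a + 1)

lemma F_eq (hq : 1 < q) (hu0 : 0 < u) (hu1 : u < 1) (a : ℕ) :
    F q u a = u ^ a / (q ^ (a ^ 2) * qPoch q 1 a * qPoch q u a) := by
  induction a using Nat.strong_induction_on with
  | _ a ih =>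
    match a with
    | 0 =>
      rw [F_zero]
      norm_num [qPoch_zero]
    | a + 1 =>
      have hqpos : (0:ℝ) < q := lt_trans one_pos hq
      have hP : ∀ m, 0 < qPoch q 1 m := qPoch_pos hq zero_le_one le_rfl
      have hU : ∀ m, 0 < qPoch q u m := qPoch_pos hq (le_of_lt hu0) (le_of_lt hu1)
      set T : ℕ → ℝ := fun b => u ^ b / (q ^ (b ^ 2) * qPoch q 1 b * qPoch q u b) with hT
      have hrec := F_rec hq hu0 hu1 (Nat.le_add_left 1 a)
      -- rewrite the sum using the induction hypothesis
      have hsum : ∑ b ∈ Finset.range (a + 1),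
            (u ^ (a+1) * q⁻¹ ^ ((a+1) ^ 2) / qPoch q 1 (a + 1 - b)) * F q u b
          = ∑ b ∈ Finset.range (a + 1),
            (u ^ (a+1) * q⁻¹ ^ ((a+1) ^ 2) / qPoch q 1 (a + 1 - b)) * T b :=
        Finset.sum_congr rfl fun b hb => by rw [ih b (by
          have := Finset.mem_range.1 hb; omega)]
      -- the full weighted sum of T values equals T (a+1)
      have hCT : ∀ b, b ≤ a + 1 →
          (u ^ (a+1) * q⁻¹ ^ ((a+1) ^ 2) / qPoch q 1 (a + 1 - b)) * T b
          = u ^ (a+1) * q⁻¹ ^ ((a+1) ^ 2) *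
            (u ^ b * q⁻¹ ^ (b ^ 2) / (qPoch q 1 b * qPoch q u b * qPoch q 1 (a + 1 - b))) := by
        intro b _
        rw [hT]
        have hq2 : (0:ℝ) < q ^ (b ^ 2) := pow_pos hqpos _
        simp only [inv_pow]
        field_simp
      have hfull : ∑ b ∈ Finset.range (a + 2),
            (u ^ (a+1) * q⁻¹ ^ ((a+1) ^ 2) / qPoch q 1 (a + 1 - b)) * T b
          = T (a+1) := by
        rw [Finset.sum_congr rfl (fun b hb => hCT b (by
          have := Finset.mem_range.1 hb; omega)), ← Finset.mul_sum,
          key_sum q u hq hu0 hu1 (a+1), hT]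
        rw [inv_pow]
        field_simp
      -- value of the top coefficient
      have htop : qPoch q 1 (a + 1 - (a + 1)) = 1 := by
        rw [Nat.sub_self]
        rfl
      rw [Finset.sum_range_succ] at hfull
      rw [htop] at hfull
      rw [Finset.sum_range_succ] at hrec
      rw [htop] at hrec
      rw [hsum] at hrec
      -- let c denote the top coefficient
      set c : ℝ := u ^ (a+1) * q⁻¹ ^ ((a+1) ^ 2) / 1 with hc
      have hc1 : c < 1 := by
        rw [hc, div_one]
        have h1 : u ^ (a+1) ≤ u := by
          calc u ^ (a+1) ≤ u ^ 1 := pow_le_pow_of_le_one (le_of_lt hu0) (le_of_lt hu1) (by omega)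
            _ = u := pow_one u
        have h2 : q⁻¹ ^ ((a+1) ^ 2) ≤ 1 :=
          pow_le_one₀ (le_of_lt (t_pos hq)) (le_of_lt (t_lt_one hq))
        have h3 : 0 < u ^ (a+1) := pow_pos hu0 _
        calc u ^ (a+1) * q⁻¹ ^ ((a+1) ^ 2) ≤ u ^ (a+1) * 1 :=
              mul_le_mul_of_nonneg_left h2 (le_of_lt h3)
          _ = u ^ (a+1) := mul_one _
          _ ≤ u := h1
          _ < 1 := hu1
      -- combine
      have hlin : F q u (a+1) * (1 - c) = T (a+1) * (1 - c) := by
        have e1 : F q u (a+1) = (T (a+1) - c * T (a+1)) + c * F q u (a+1) := by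
          conv_lhs => rw [hrec]
          have h6 : ∑ b ∈ Finset.range (a + 1),
              (u ^ (a+1) * q⁻¹ ^ ((a+1) ^ 2) / qPoch q 1 (a + 1 - b)) * T b
              = T (a+1) - c * T (a+1) := by
            linarith [hfull]
          rw [h6]
        nlinarith [e1]
      have hne : (1 - c) ≠ 0 := by
        intro h
        rw [sub_eq_zero] at h
        exact absurd h.symm (ne_of_lt hc1)
      exact mul_right_cancel₀ hne hlin

end QAux

/-- For `q > 1`, `0 < u < 1` and a nonnegative integer `a`, the sum over all partitions `λ`
(of all nonnegative integers) with exactly `a` parts of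
`u^{|λ|}/(q^{∑ᵢ (λ'ᵢ)²} ∏ᵢ (1/q)_{mᵢ(λ)})` equals `u^a / (q^{a²} (1/q)_a (u/q)_a)`. -/
theorem sum_partitions_with_a_parts (q u : ℝ) (hq : 1 < q) (hu0 : 0 < u) (hu1 : u < 1)
    (a : ℕ) :
    ∑' p : {p : Σ n : ℕ, Nat.Partition n // p.2.parts.card = a},
        u ^ (p : Σ n : ℕ, Nat.Partition n).1 /
          (q ^ (∑ i ∈ Finset.Icc 1 (p : Σ n : ℕ, Nat.Partition n).1,
                (conjPart (p : Σ n : ℕ, Nat.Partition n).2 i) ^ 2) *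
            ∏ i ∈ Finset.Icc 1 (p : Σ n : ℕ, Nat.Partition n).1,
              qPoch q 1 (Multiset.count i (p : Σ n : ℕ, Nat.Partition n).2.parts)) =
      u ^ a / (q ^ (a ^ 2) * qPoch q 1 a * qPoch q u a) := by
  exact QAux.F_eq hq hu0 hu1 a
end

section
/- Let q > 1 and 0 < u < 1 be real numbers and let a be a nonnegative integer. With (1/q)_m = ∏_{j=1}^m (1 − q^{−j}) and (u/q)_m = ∏_{j=1}^m (1 − u·q^{−j}), define K(a,b) = u^b (1/q)_a (u/q)_a / (q^{b²} (1/q)_{a−b} (1/q)_b (u/q)_b) for 0 ≤ b ≤ a. Then ∑_{b=0}^a K(a,b) = 1. -/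
/-- The transition probability `K(a,b)` of the Markov chain associated to `M_{GL,u,q}`. -/
noncomputable def markovK (q u : ℝ) (a b : ℕ) : ℝ :=
  u ^ b * qPoch q 1 a * qPoch q u a /
    (q ^ (b ^ 2) * qPoch q 1 (a - b) * qPoch q 1 b * qPoch q u b)

/-- Tail of the q-Pochhammer product, starting after index `b`. -/
noncomputable def tailPoch (q u : ℝ) (b n : ℕ) : ℝ :=
  ∏ j ∈ Finset.range n, (1 - u * q⁻¹ ^ (b + j + 1))

lemma qPoch_add (q u : ℝ) (b n : ℕ) :
    qPoch q u (b + n) = qPoch q u b * tailPoch q u b n := by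
  unfold qPoch tailPoch
  rw [Finset.prod_range_add]

lemma qPoch_succ (q u : ℝ) (m : ℕ) :
    qPoch q u (m + 1) = qPoch q u m * (1 - u * q⁻¹ ^ (m + 1)) :=
  Finset.prod_range_succ _ _

lemma tailPoch_succ (q u : ℝ) (b n : ℕ) :
    tailPoch q u b (n + 1) = tailPoch q u b n * (1 - u * q⁻¹ ^ (b + n + 1)) :=
  Finset.prod_range_succ _ _

lemma tailPoch_shift (q u : ℝ) (b n : ℕ) :
    tailPoch q (u * q⁻¹) b n = tailPoch q u (b + 1) n :=
  Finset.prod_congr rfl fun j _ => by ring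

lemma one_sub_factor_pos {q u : ℝ} (hq : 1 < q) (hu : u ≤ 1) (j : ℕ) :
    0 < 1 - u * q⁻¹ ^ (j + 1) := by
  have hq0 : 0 < q := lt_trans one_pos hq
  have hp0 : 0 < q⁻¹ := inv_pos.mpr hq0
  have hp1 : q⁻¹ < 1 := inv_lt_one_of_one_lt₀ hq
  have ht0 : 0 < q⁻¹ ^ (j + 1) := pow_pos hp0 _
  have ht1 : q⁻¹ ^ (j + 1) < 1 := pow_lt_one₀ hp0.le hp1 (Nat.succ_ne_zero j)
  nlinarith

lemma qPoch_pos {q u : ℝ} (hq : 1 < q) (hu : u ≤ 1) (m : ℕ) : 0 < qPoch q u m :=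
  Finset.prod_pos fun j _ => one_sub_factor_pos hq hu j

/-- The summand rewritten via the tail product. -/
noncomputable def Fterm (q u : ℝ) (a b : ℕ) : ℝ :=
  u ^ b * q⁻¹ ^ (b ^ 2) * (qPoch q 1 a / (qPoch q 1 (a - b) * qPoch q 1 b)) *
    tailPoch q u b (a - b)

lemma key (q : ℝ) (hq : 1 < q) :
    ∀ a : ℕ, ∀ u : ℝ, ∑ b ∈ Finset.range (a + 1), Fterm q u a b = 1 := by
  have hP : ∀ m, qPoch q 1 m ≠ 0 := fun m => ne_of_gt (qPoch_pos hq le_rfl m)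
  intro a
  induction a with
  | zero =>
    intro u
    simp [Fterm, qPoch, tailPoch]
  | succ a ih =>
    intro u
    have hstep : ∀ b ∈ Finset.range (a + 2), Fterm q u (a + 1) b =
        (if b ≤ a then (1 - u * q⁻¹ ^ (a + 1)) * Fterm q u a b else 0) +
        (if b = 0 then 0 else u * q⁻¹ ^ (a + 1) * Fterm q (u * q⁻¹) a (b - 1)) := by
      intro b hb
      have hb' : b ≤ a + 1 := by
        have := Finset.mem_range.mp hb; omega
      match b with
      | 0 =>
        have hF0 : ∀ (v : ℝ) (A : ℕ), Fterm q v A 0 = tailPoch q v 0 A := by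
          intro v A
          rw [Fterm, Nat.sub_zero, show qPoch q 1 0 = 1 by simp [qPoch], mul_one,
            div_self (hP A)]
          norm_num
        simp only [if_pos (Nat.zero_le a), ite_true, if_true, eq_self_iff_true, add_zero, hF0]
        rw [tailPoch_succ]
        ring
      | (c + 1) =>
        by_cases hc : c + 1 ≤ a
        · -- middle case: Pascal recurrence
          obtain ⟨e, he⟩ : ∃ e, a = c + 1 + e := ⟨a - (c + 1), by omega⟩
          subst he
          simp only [if_pos hc, if_neg (Nat.succ_ne_zero c), Nat.add_sub_cancel]
          have h1 : c + 1 + e + 1 - (c + 1) = e + 1 := by omega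
          have h2 : c + 1 + e - (c + 1) = e := by omega
          have h3 : c + 1 + e - c = e + 1 := by omega
          simp only [Fterm, h1, h2, h3]
          rw [tailPoch_shift, show c + 1 + e + 1 = (c + 1 + e) + 1 from rfl,
            qPoch_succ q 1 (c + 1 + e), qPoch_succ q 1 e, qPoch_succ q 1 c,
            tailPoch_succ q u (c + 1) e]
          have hPa := hP (c + 1 + e)
          have hPe := hP e
          have hPc := hP c
          have hfe : (1 : ℝ) - 1 * q⁻¹ ^ (e + 1) ≠ 0 :=
            ne_of_gt (one_sub_factor_pos hq le_rfl e)
          have hfc : (1 : ℝ) - 1 * q⁻¹ ^ (c + 1) ≠ 0 :=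
            ne_of_gt (one_sub_factor_pos hq le_rfl c)
          generalize q⁻¹ = p at hfe hfc ⊢
          have hD1 : qPoch q 1 e * (1 - 1 * p ^ (e + 1)) *
              (qPoch q 1 c * (1 - 1 * p ^ (c + 1))) ≠ 0 :=
            mul_ne_zero (mul_ne_zero hPe hfe) (mul_ne_zero hPc hfc)
          have hD2 : qPoch q 1 e * (qPoch q 1 c * (1 - 1 * p ^ (c + 1))) ≠ 0 :=
            mul_ne_zero hPe (mul_ne_zero hPc hfc)
          have hD3 : qPoch q 1 e * (1 - 1 * p ^ (e + 1)) * qPoch q 1 c ≠ 0 :=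
            mul_ne_zero (mul_ne_zero hPe hfe) hPc
          have e2 : qPoch q 1 (c + 1 + e) /
              (qPoch q 1 e * (qPoch q 1 c * (1 - 1 * p ^ (c + 1)))) =
              qPoch q 1 (c + 1 + e) * (1 - 1 * p ^ (e + 1)) /
              (qPoch q 1 e * (1 - 1 * p ^ (e + 1)) *
                (qPoch q 1 c * (1 - 1 * p ^ (c + 1)))) := by
            rw [div_eq_div_iff hD2 hD1]; ring
          have e3 : qPoch q 1 (c + 1 + e) /
              (qPoch q 1 e * (1 - 1 * p ^ (e + 1)) * qPoch q 1 c) =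
              qPoch q 1 (c + 1 + e) * (1 - 1 * p ^ (c + 1)) /
              (qPoch q 1 e * (1 - 1 * p ^ (e + 1)) *
                (qPoch q 1 c * (1 - 1 * p ^ (c + 1)))) := by
            rw [div_eq_div_iff hD3 hD1]; ring
          rw [e2, e3]
          simp only [div_eq_mul_inv]
          ring
        · -- boundary case b = a + 1
          have hca : c = a := by omega
          subst hca
          simp only [if_neg hc, if_neg (Nat.succ_ne_zero c), Nat.add_sub_cancel, zero_add]
          simp only [Fterm, Nat.sub_self]
          have h0 : qPoch q 1 0 = 1 := by simp [qPoch]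
          have ht0 : ∀ v b, tailPoch q v b 0 = 1 := by intro v b; simp [tailPoch]
          rw [h0, ht0, ht0]
          simp only [one_mul, mul_one, div_self (hP (c + 1)), div_self (hP c)]
          generalize q⁻¹ = p
          ring
    rw [Finset.sum_congr rfl hstep, Finset.sum_add_distrib]
    have hsum1 : ∑ b ∈ Finset.range (a + 2),
        (if b ≤ a then (1 - u * q⁻¹ ^ (a + 1)) * Fterm q u a b else 0)
        = 1 - u * q⁻¹ ^ (a + 1) := by
      rw [Finset.sum_range_succ, if_neg (by omega)]
      rw [Finset.sum_congr rfl (fun b hb => if_pos (by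
        have := Finset.mem_range.mp hb; omega))]
      rw [← Finset.mul_sum, ih u, mul_one, add_zero]
    have hsum2 : ∑ b ∈ Finset.range (a + 2),
        (if b = 0 then 0 else u * q⁻¹ ^ (a + 1) * Fterm q (u * q⁻¹) a (b - 1))
        = u * q⁻¹ ^ (a + 1) := by
      rw [Finset.sum_range_succ']
      simp only [Nat.succ_ne_zero, if_false, if_true, ite_false, ite_true,
        Nat.add_sub_cancel, add_zero]
      rw [← Finset.mul_sum, ih (u * q⁻¹), mul_one]
    rw [hsum1, hsum2]
    ring

/-- For `q > 1` and `0 < u < 1`, the transition probabilities sum to one: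
`∑_{b=0}^a K(a,b) = 1`. -/
theorem markovK_sum_eq_one (q u : ℝ) (hq : 1 < q) (hu0 : 0 < u) (hu1 : u < 1) (a : ℕ) :
    ∑ b ∈ Finset.range (a + 1), markovK q u a b = 1 := by
  have hq0 : (0 : ℝ) < q := lt_trans one_pos hq
  have hP : ∀ m, qPoch q 1 m ≠ 0 := fun m => ne_of_gt (qPoch_pos hq le_rfl m)
  have hPu : ∀ m, qPoch q u m ≠ 0 := fun m => ne_of_gt (qPoch_pos hq hu1.le m)
  have hterm : ∀ b ∈ Finset.range (a + 1), markovK q u a b = Fterm q u a b := by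
    intro b hb
    have hba : b ≤ a := by have := Finset.mem_range.mp hb; omega
    have ha : a = b + (a - b) := by omega
    have hsplit : qPoch q u a = qPoch q u b * tailPoch q u b (a - b) := by
      have h := qPoch_add q u b (a - b)
      rw [← ha] at h
      exact h
    rw [markovK, Fterm, hsplit]
    have hqb : (q : ℝ) ^ (b ^ 2) ≠ 0 := pow_ne_zero _ (ne_of_gt hq0)
    field_simp [hP (a - b), hP b, hPu b, hqb]
    rw [one_div_pow, mul_assoc _ (q ^ b ^ 2), mul_one_div_cancel hqb, mul_one]
  rw [Finset.sum_congr rfl hterm, key q hq a u]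
end
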